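/- arXiv:1206.3546 — 10 statements merged into one kernel-verified Lean document; each statement's English description precedes it below -/
import Mathlib

section
/- Let K be a UFD of characteristic p > 0, let A = K[x_1,…,x_n] be the polynomial algebra with m,n ≥ 1, and let f_1,…,f_m ∈ A. If Q is a prime ideal of A containing every m×m jacobian minor jac^{f_1,…,f_m}_{j_1,…,j_m} (j_1,…,j_m ∈ {1,…,n}), then there exist an index i ∈ {1,…,m} and polynomials b,c ∈ K[x_1^p,…,x_n^p, f_1,…,f_{i-1},f_{i+1},…,f_m] with b ∉ Q such that b·f_i + c ∈ Q. -/
open MvPolynomial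

/-- The monomial `f₁^{α₁} ⋯ f_m^{α_m}` for a multi-index `α ∈ Ω_m` (all exponents `< p`). -/
def pMonomial {S : Type*} [CommRing S] {m p : ℕ} (f : Fin m → S) (α : Fin m → Fin p) : S :=
  ∏ i, f i ^ (α i : ℕ)

/-- `f₁, …, f_m` are `p`-independent over the subring `B`. -/
def pIndependent {S : Type*} [CommRing S] (B : Subring S) {m : ℕ} (p : ℕ) (f : Fin m → S) : Prop :=
  ∀ b : (Fin m → Fin p) → S, (∀ α, b α ∈ B) →
    ∑ α : Fin m → Fin p, b α * pMonomial f α = 0 → ∀ α, b α = 0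

/-- `f₁, …, f_m` form a `p`-basis of `R` over `B`. -/
def IsPBasis {S : Type*} [CommRing S] (B : Subring S) (R : Set S) {m : ℕ} (p : ℕ)
    (f : Fin m → S) : Prop :=
  (↑B ⊆ R) ∧ (∀ α : Fin m → Fin p, pMonomial f α ∈ R) ∧ pIndependent B p f ∧
    ∀ r ∈ R, ∃ b : (Fin m → Fin p) → S, (∀ α, b α ∈ B) ∧
      r = ∑ α : Fin m → Fin p, b α * pMonomial f α

/-- The jacobian determinant of `f₁,…,f_m` w.r.t. the variables `x_{j₁},…,x_{j_m}`. -/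
noncomputable def jacMinor {K : Type*} [CommRing K] {n m : ℕ} (f : Fin m → MvPolynomial (Fin n) K)
    (j : Fin m → Fin n) : MvPolynomial (Fin n) K :=
  (Matrix.of fun i l => pderiv (j l) (f i)).det

/-- The subring `B = K[x₁^p, …, x_n^p]` of `K[x₁,…,x_n]`. -/
noncomputable def pPowers (K : Type*) [CommRing K] (n p : ℕ) : Subring (MvPolynomial (Fin n) K) :=
  (Algebra.adjoin K (Set.range fun i : Fin n => (X i : MvPolynomial (Fin n) K) ^ p)).toSubring

/-- `R_i = B[f₁,…,f̂ᵢ,…,f_m]`. -/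
noncomputable def Ri (K : Type*) [CommRing K] {n m : ℕ} (p : ℕ) (f : Fin m → MvPolynomial (Fin n) K)
    (i : Fin m) : Subring (MvPolynomial (Fin n) K) :=
  Subring.closure (↑(pPowers K n p) ∪ (f '' {j | j ≠ i}))

/-- `R_{ij} = B[f₁,…,f̂ᵢ,…,f̂ⱼ,…,f_m]`. -/
noncomputable def Rij (K : Type*) [CommRing K] {n m : ℕ} (p : ℕ) (f : Fin m → MvPolynomial (Fin n) K)
    (i j : Fin m) : Subring (MvPolynomial (Fin n) K) :=
  Subring.closure (↑(pPowers K n p) ∪ (f '' {l | l ≠ i ∧ l ≠ j}))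

/-- An element is `B`-free if it has no noninvertible factor from `B`. -/
def BFree {S : Type*} [CommRing S] (B : Subring S) (a : S) : Prop :=
  ∀ b ∈ B, b ∣ a → IsUnit b

/-- `C_B(f₁,…,f_m) = B₀(f₁,…,f_m) ∩ A`: those elements of `A` lying in the field of
fractions of `B[f₁,…,f_m]`. -/
def CB {S : Type*} [CommRing S] (B : Subring S) {m : ℕ} (f : Fin m → S) : Set S :=
  {a | ∃ s t : S, s ∈ Subring.closure (↑B ∪ Set.range f) ∧
      t ∈ Subring.closure (↑B ∪ Set.range f) ∧ s ≠ 0 ∧ a * s = t}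

/-- A `B`-derivation of `A`: additive, Leibniz rule, vanishing on `B`. -/
def IsBDerivation {S : Type*} [CommRing S] (B : Subring S) (d : S → S) : Prop :=
  (∀ x y, d (x + y) = d x + d y) ∧ (∀ x y, d (x * y) = x * d y + y * d x) ∧ ∀ b ∈ B, d b = 0

/-! Suppose no index works, and map `A` to the fraction field `L` of `A ⧸ Q`. For each `i` the
image of `fᵢ` then lies outside the subfield `Fᵢ` generated by the image of `Rᵢ`, while `Fᵢ`
contains the image of every `a ^ p`. Adjoining the image of `fᵢ` and then the images of the
variables one at a time, each step being `E(u) ≅ E[X] ⧸ (X ^ p - u ^ p)`, extends the zero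
derivation of `Fᵢ` to a derivation `Dᵢ` with `Dᵢ fᵢ = 1`, hence `Dᵢ fₗ = δᵢₗ`. By the chain rule
the jacobian matrix `J` (modulo `Q`) times the matrix `(Dᵢ xⱼ)` is the identity, whereas by
multilinearity of the determinant `det (J N)` is a combination of `m × m` minors of `J`, all of
which vanish modulo `Q`. -/

-- Derivations on the subfields of one field `L` are functions `L → L`, constrained only on the
-- subfield, so that extending along a tower of subfields never changes types.
structure IsDerivationOn {L : Type*} [Field L] (E : Subfield L) (d : L → L) : Prop where
  map_add : ∀ x ∈ E, ∀ y ∈ E, d (x + y) = d x + d y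
  leibniz : ∀ x ∈ E, ∀ y ∈ E, d (x * y) = x * d y + y * d x

namespace IsDerivationOn

variable {L : Type*} [Field L] {E : Subfield L} {d : L → L}

theorem map_zero (hd : IsDerivationOn E d) : d 0 = 0 := by
  simpa using hd.map_add 0 E.zero_mem 0 E.zero_mem

theorem map_one (hd : IsDerivationOn E d) : d 1 = 0 := by
  simpa using hd.leibniz 1 E.one_mem 1 E.one_mem

theorem map_neg (hd : IsDerivationOn E d) {x : L} (hx : x ∈ E) : d (-x) = -d x := by
  have h := hd.map_add x hx (-x) (E.neg_mem hx)
  rw [add_neg_cancel, hd.map_zero] at h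
  linear_combination -h

end IsDerivationOn

namespace Polynomial

variable {L : Type*} [Field L] {E : Subfield L} {d : L → L}

def coeffDeriv (d : L → L) (u : L) (g : E[X]) : L :=
  g.sum fun k a => d a * u ^ k

theorem coeffDeriv_add (hd : IsDerivationOn E d) (u : L) (g h : E[X]) :
    coeffDeriv d u (g + h) = coeffDeriv d u g + coeffDeriv d u h :=
  sum_add_index g h _ (fun _ => by simp [hd.map_zero])
    fun _ a b => by simp [hd.map_add a a.2 b b.2, add_mul]

theorem coeffDeriv_monomial (hd : IsDerivationOn E d) (u : L) (k : ℕ) (a : E) :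
    coeffDeriv d u (monomial k a) = d a * u ^ k :=
  sum_monomial_index a _ (by simp [hd.map_zero])

theorem coeffDeriv_mul (hd : IsDerivationOn E d) (u : L) (g h : E[X]) :
    coeffDeriv d u (g * h) = coeffDeriv d u g * aeval u h + aeval u g * coeffDeriv d u h := by
  induction h using Polynomial.induction_on' with
  | add h₁ h₂ ih₁ ih₂ => simp only [mul_add, coeffDeriv_add hd, ih₁, ih₂, map_add]; ring
  | monomial l b =>
    induction g using Polynomial.induction_on' with
    | add g₁ g₂ ih₁ ih₂ => simp only [add_mul, coeffDeriv_add hd, ih₁, ih₂, map_add]; ring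
    | monomial k a =>
      simp only [monomial_mul_monomial, coeffDeriv_monomial hd, aeval_monomial,
        Subfield.coe_mul, hd.leibniz a a.2 b b.2, pow_add]
      show (a * d b + b * d a) * (u ^ k * u ^ l) =
        d a * u ^ k * (b * u ^ l) + a * u ^ k * (d b * u ^ l)
      ring

-- The value at `g(u)` of the extension of `d` that sends `u` to `v`:
-- `d (∑ aₖ uᵏ) = ∑ d(aₖ) uᵏ + g'(u) v`.
noncomputable def derivAdjoin (d : L → L) (u v : L) (g : E[X]) : L :=
  coeffDeriv d u g + aeval u (derivative g) * v

theorem derivAdjoin_add (hd : IsDerivationOn E d) (u v : L) (g h : E[X]) :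
    derivAdjoin d u v (g + h) = derivAdjoin d u v g + derivAdjoin d u v h := by
  simp only [derivAdjoin, coeffDeriv_add hd, map_add]; ring

theorem derivAdjoin_mul (hd : IsDerivationOn E d) (u v : L) (g h : E[X]) :
    derivAdjoin d u v (g * h) =
      derivAdjoin d u v g * aeval u h + aeval u g * derivAdjoin d u v h := by
  simp only [derivAdjoin, coeffDeriv_mul hd, derivative_mul, map_add, map_mul]; ring

theorem derivAdjoin_C (hd : IsDerivationOn E d) (u v : L) (a : E) :
    derivAdjoin d u v (C a) = d a := by
  rw [derivAdjoin, derivative_C, ← monomial_zero_left, coeffDeriv_monomial hd]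
  simp

theorem derivAdjoin_X (hd : IsDerivationOn E d) (u v : L) :
    derivAdjoin d u v (X : E[X]) = v := by
  simp [derivAdjoin, ← monomial_one_one_eq_X, coeffDeriv_monomial hd, hd.map_one]

theorem derivAdjoin_X_pow_sub_C {p : ℕ} [CharP L p] (hd : IsDerivationOn E d) (u v : L)
    {c : E} (hc : d c = 0) : derivAdjoin d u v (X ^ p - C c) = 0 := by
  have hpE : (p : E) = 0 := by exact_mod_cast Subtype.ext (CharP.cast_eq_zero L p)
  have hcoeff : coeffDeriv d u (X ^ p - C c) = 0 := by
    rw [sub_eq_add_neg, ← map_neg, coeffDeriv_add hd, X_pow_eq_monomial, ← monomial_zero_left,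
      coeffDeriv_monomial hd, coeffDeriv_monomial hd, OneMemClass.coe_one, hd.map_one,
      NegMemClass.coe_neg, hd.map_neg c.2, hc]
    ring
  rw [derivAdjoin, hcoeff, derivative_sub, derivative_C, derivative_X_pow, hpE]
  simp

theorem aeval_X_pow_sub_C_pow {p : ℕ} (u : L) (hup : u ^ p ∈ E) :
    aeval u (X ^ p - C ⟨u ^ p, hup⟩ : E[X]) = 0 := by
  simp only [map_sub, map_pow, aeval_X, aeval_C]
  exact sub_self _

theorem _root_.minpoly.eq_X_pow_sub_C_of_pow_mem {p : ℕ} [Fact p.Prime] [CharP L p] {u : L}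
    (hu : u ∉ E) (hup : u ^ p ∈ E) : minpoly E u = X ^ p - C ⟨u ^ p, hup⟩ := by
  have hp : p.Prime := Fact.out
  have hirr : Irreducible (X ^ p - C (⟨u ^ p, hup⟩ : E)) :=
    X_pow_sub_C_irreducible_of_prime hp fun b hb => hu <|
      frobenius_inj L p (a₁ := b) (by simpa [frobenius_def] using congrArg Subtype.val hb) ▸ b.2
  exact (minpoly.eq_of_irreducible_of_monic hirr (aeval_X_pow_sub_C_pow u hup)
    (monic_X_pow_sub_C _ hp.ne_zero)).symm

theorem derivAdjoin_eq_of_aeval_eq {p : ℕ} [Fact p.Prime] [CharP L p] (hd : IsDerivationOn E d)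
    {u : L} (hu : u ∉ E) (hup : u ^ p ∈ E) (hdup : d (u ^ p) = 0) (v : L) {g h : E[X]}
    (hgh : aeval u g = aeval u h) : derivAdjoin d u v g = derivAdjoin d u v h := by
  obtain ⟨q, hq⟩ : X ^ p - C ⟨u ^ p, hup⟩ ∣ g - h := by
    rw [← minpoly.eq_X_pow_sub_C_of_pow_mem hu hup]
    exact minpoly.dvd _ _ (by rw [map_sub, hgh, sub_self])
  rw [sub_eq_iff_eq_add'.mp hq, derivAdjoin_add hd, derivAdjoin_mul hd,
    derivAdjoin_X_pow_sub_C hd _ _ hdup, aeval_X_pow_sub_C_pow]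
  simp

theorem _root_.IntermediateField.mem_adjoin_simple_iff_exists_aeval_of_pow_mem {p : ℕ}
    [Fact p.Prime] {u : L} (hup : u ^ p ∈ E) (x : L) :
    x ∈ (IntermediateField.adjoin E {u}).toSubfield ↔ ∃ g : E[X], aeval u g = x := by
  have hint : IsIntegral E u :=
    .of_pow (Fact.out : p.Prime).pos (isIntegral_algebraMap (x := (⟨u ^ p, hup⟩ : E)))
  rw [IntermediateField.mem_toSubfield, ← IntermediateField.mem_toSubalgebra,
    IntermediateField.adjoin_simple_toSubalgebra_of_isAlgebraic hint.isAlgebraic,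
    Algebra.adjoin_singleton_eq_range_aeval]
  rfl

theorem _root_.IsDerivationOn.exists_extension_adjoin {p : ℕ} [Fact p.Prime] [CharP L p]
    (hd : IsDerivationOn E d) {u : L} (hu : u ∉ E) (hup : u ^ p ∈ E) (hdup : d (u ^ p) = 0)
    (v : L) :
    ∃ E' : Subfield L, ∃ d' : L → L, E ≤ E' ∧ u ∈ E' ∧ IsDerivationOn E' d' ∧
      (∀ x ∈ E, d' x = d x) ∧ d' u = v := by
  classical
  let d' : L → L := fun x =>
    if h : ∃ g : E[X], aeval u g = x then derivAdjoin d u v h.choose else 0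
  have hd' (g : E[X]) : d' (aeval u g) = derivAdjoin d u v g := by
    have h : ∃ g' : E[X], aeval u g' = aeval u g := ⟨g, rfl⟩
    simp only [d', dif_pos h]
    exact derivAdjoin_eq_of_aeval_eq hd hu hup hdup v h.choose_spec
  have hmem := IntermediateField.mem_adjoin_simple_iff_exists_aeval_of_pow_mem hup
  refine ⟨_, d', fun x hx => (hmem x).2 ⟨C ⟨x, hx⟩, aeval_C _ _⟩, (hmem u).2 ⟨X, aeval_X u⟩,
    ⟨?_, ?_⟩, fun x hx => ?_, ?_⟩
  · rintro _ hx _ hy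
    obtain ⟨g, rfl⟩ := (hmem _).1 hx
    obtain ⟨h, rfl⟩ := (hmem _).1 hy
    rw [← _root_.map_add (aeval u), hd', hd', hd', derivAdjoin_add hd]
  · rintro _ hx _ hy
    obtain ⟨g, rfl⟩ := (hmem _).1 hx
    obtain ⟨h, rfl⟩ := (hmem _).1 hy
    rw [← _root_.map_mul (aeval u), hd', hd', hd', derivAdjoin_mul hd]
    ring
  · have h := hd' (C ⟨x, hx⟩)
    rw [aeval_C, derivAdjoin_C hd] at h
    exact h
  · simpa [derivAdjoin_X hd] using hd' X

end Polynomial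

namespace IsDerivationOn

variable {L : Type*} [Field L] {p : ℕ} [Fact p.Prime] [CharP L p] {F E : Subfield L}
  {d : L → L}

theorem exists_extension_of_pow_mem (hd : IsDerivationOn E d) (hFE : F ≤ E)
    (hdF : ∀ x ∈ F, d x = 0) (s : Finset L) (hs : ∀ u ∈ s, u ^ p ∈ F) :
    ∃ E' : Subfield L, ∃ d' : L → L, E ≤ E' ∧ ↑s ⊆ (E' : Set L) ∧ IsDerivationOn E' d' ∧
      ∀ x ∈ E, d' x = d x := by
  classical
  induction s using Finset.induction_on with
  | empty => exact ⟨E, d, le_rfl, by simp, hd, fun _ _ => rfl⟩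
  | insert u s _ ih =>
    obtain ⟨E₁, d₁, hEE₁, hsE₁, hd₁, hd₁d⟩ := ih fun w hw => hs w (Finset.mem_insert_of_mem hw)
    have hup : u ^ p ∈ F := hs u (Finset.mem_insert_self u s)
    by_cases huE₁ : u ∈ E₁
    · exact ⟨E₁, d₁, hEE₁, by simp [Set.insert_subset_iff, huE₁, hsE₁], hd₁, hd₁d⟩
    obtain ⟨E₂, d₂, hE₁E₂, huE₂, hd₂, hd₂d₁, -⟩ := hd₁.exists_extension_adjoin huE₁
      (hEE₁ (hFE hup)) (by rw [hd₁d _ (hFE hup), hdF _ hup]) 0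
    refine ⟨E₂, d₂, hEE₁.trans hE₁E₂, ?_, hd₂, fun x hx => by rw [hd₂d₁ x (hEE₁ hx), hd₁d x hx]⟩
    simp only [Finset.coe_insert, Set.insert_subset_iff]
    exact ⟨huE₂, hsE₁.trans hE₁E₂⟩

end IsDerivationOn

theorem Subfield.exists_derivation_eq_one {L : Type*} [Field L] {p : ℕ} [Fact p.Prime]
    [CharP L p] {F : Subfield L} {u : L} (hu : u ∉ F) (hup : u ^ p ∈ F) (s : Finset L)
    (hs : ∀ w ∈ s, w ^ p ∈ F) :
    ∃ E : Subfield L, ∃ d : L → L, F ≤ E ∧ ↑s ⊆ (E : Set L) ∧ IsDerivationOn E d ∧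
      (∀ x ∈ F, d x = 0) ∧ d u = 1 := by
  have hzero : IsDerivationOn F fun _ => 0 := ⟨by simp, by simp⟩
  obtain ⟨E₁, d₁, hFE₁, huE₁, hd₁, hd₁F, hd₁u⟩ := hzero.exists_extension_adjoin hu hup rfl 1
  obtain ⟨E, d, hE₁E, hsE, hd, hdd₁⟩ := hd₁.exists_extension_of_pow_mem hFE₁ hd₁F s hs
  exact ⟨E, d, hFE₁.trans hE₁E, hsE, hd, fun x hx => by rw [hdd₁ x (hFE₁ hx), hd₁F x hx],
    by rw [hdd₁ u huE₁, hd₁u]⟩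

theorem IsDerivationOn.map_eq_sum_pderiv {σ K L : Type*} [Fintype σ] [CommRing K] [Field L]
    {E : Subfield L} {d : L → L} (hd : IsDerivationOn E d) (φ : MvPolynomial σ K →+* L)
    (hφ : ∀ a, φ a ∈ E) (hC : ∀ k, d (φ (C k)) = 0) (a : MvPolynomial σ K) :
    d (φ a) = ∑ j, φ (pderiv j a) * d (φ (X j)) := by
  classical
  induction a using MvPolynomial.induction_on with
  | C k => simp [hC k]
  | add q r hq hr =>
    simp only [_root_.map_add, hd.map_add _ (hφ q) _ (hφ r), hq, hr, add_mul,
      Finset.sum_add_distrib]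
  | mul_X q j hq =>
    simp only [_root_.map_mul, hd.leibniz _ (hφ q) _ (hφ (X j)), hq, Derivation.leibniz,
      pderiv_X, smul_eq_mul, Pi.single_apply, _root_.map_add, add_mul, Finset.sum_add_distrib,
      Finset.mul_sum]
    simp [mul_comm, mul_left_comm]

open Matrix in
theorem Matrix.det_mul_eq_zero_of_det_submatrix_eq_zero {ι κ R : Type*} [Fintype ι]
    [DecidableEq ι] [Fintype κ] [DecidableEq κ] [CommRing R] (A : Matrix ι κ R)
    (B : Matrix κ ι R) (h : ∀ r : ι → κ, (A.submatrix id r).det = 0) : (A * B).det = 0 := by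
  have hrows : (A * B)ᵀ = of fun i => ∑ k, B k i • Aᵀ k := by
    ext i l
    simp [mul_apply, Finset.sum_apply, mul_comm]
  rw [← det_transpose, hrows]
  change detRowAlternating.toMultilinearMap (fun i => ∑ k, B k i • Aᵀ k) = 0
  rw [MultilinearMap.map_sum]
  refine Finset.sum_eq_zero fun r _ => ?_
  rw [MultilinearMap.map_smul_univ]
  change (∏ i, B (r i) i) • (Aᵀ.submatrix r id).det = 0
  rw [← transpose_submatrix, det_transpose, h r, smul_zero]

theorem exists_map_jacMinor_ne_zero {K L : Type*} [CommRing K] [Field L] {n m : ℕ}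
    (φ : MvPolynomial (Fin n) K →+* L) (f : Fin m → MvPolynomial (Fin n) K) (D : Fin m → L → L)
    (hD : ∀ i a, D i (φ a) = ∑ j, φ (pderiv j a) * D i (φ (X j)))
    (hDf : ∀ i l, D i (φ (f l)) = if l = i then 1 else 0) :
    ∃ j, φ (jacMinor f j) ≠ 0 := by
  let J : Matrix (Fin m) (Fin n) L := (Matrix.of fun l j => pderiv j (f l)).map φ
  let N : Matrix (Fin n) (Fin m) L := Matrix.of fun j i => D i (φ (X j))
  have hJN : J * N = 1 := by
    ext l i
    simp [J, N, Matrix.mul_apply, ← hD, hDf, Matrix.one_apply]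
  by_contra! h
  have hminor (r : Fin m → Fin n) : (J.submatrix id r).det = φ (jacMinor f r) := by
    rw [jacMinor, RingHom.map_det]
    rfl
  have hdet := Matrix.det_mul_eq_zero_of_det_submatrix_eq_zero J N fun r => (hminor r).trans (h r)
  simp [hJN] at hdet

theorem exists_mul_add_map_eq_zero_of_map_mem_closure {A L : Type*} [CommRing A] [Field L]
    (φ : A →+* L) (R : Subring A) {a : A} (ha : φ a ∈ Subfield.closure (φ '' R)) :
    ∃ b ∈ R, ∃ c ∈ R, φ b ≠ 0 ∧ φ (b * a + c) = 0 := by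
  rw [Subfield.mem_closure_iff, ← Subring.coe_map, Subring.closure_eq] at ha
  obtain ⟨_, ⟨t, ht, rfl⟩, _, ⟨s, hs, rfl⟩, hts⟩ := ha
  by_cases hs0 : φ s = 0
  · exact ⟨1, R.one_mem, 0, R.zero_mem, by simp, by simp [← hts, hs0]⟩
  · refine ⟨s, hs, -t, R.neg_mem ht, hs0, ?_⟩
    rw [map_add, map_mul, map_neg, ← hts, mul_div_cancel₀ _ hs0, add_neg_cancel]

theorem C_mem_pPowers {K : Type*} [CommRing K] {n p : ℕ} (k : K) : C k ∈ pPowers K n p :=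
  Subalgebra.algebraMap_mem _ k

theorem X_pow_mem_pPowers {K : Type*} [CommRing K] {n p : ℕ} (j : Fin n) :
    (X j : MvPolynomial (Fin n) K) ^ p ∈ pPowers K n p :=
  Algebra.subset_adjoin ⟨j, rfl⟩

theorem pow_mem_pPowers {K : Type*} [CommRing K] {p : ℕ} [Fact p.Prime] [CharP K p] {n : ℕ}
    (a : MvPolynomial (Fin n) K) : a ^ p ∈ pPowers K n p := by
  induction a using MvPolynomial.induction_on with
  | C k => exact C_pow k p ▸ C_mem_pPowers (k ^ p)
  | add q r hq hr => exact add_pow_char q r p ▸ add_mem hq hr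
  | mul_X q j hq => exact (mul_pow q (X j) p).symm ▸ mul_mem hq (X_pow_mem_pPowers j)

theorem pPowers_le_Ri {K : Type*} [CommRing K] {n m p : ℕ} (f : Fin m → MvPolynomial (Fin n) K)
    (i : Fin m) : pPowers K n p ≤ Ri K p f i :=
  fun _ hx => Subring.subset_closure (Or.inl hx)

theorem mem_Ri_of_ne {K : Type*} [CommRing K] {n m p : ℕ} (f : Fin m → MvPolynomial (Fin n) K)
    {i l : Fin m} (hl : l ≠ i) : f l ∈ Ri K p f i :=
  Subring.subset_closure (Or.inr ⟨l, hl, rfl⟩)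

theorem exists_derivation_map_eq_one {K L : Type*} [CommRing K] [Field L] {n p : ℕ}
    [Fact p.Prime] [CharP K p] [CharP L p] (φ : MvPolynomial (Fin n) K →+* L)
    {R : Subring (MvPolynomial (Fin n) K)} (hR : pPowers K n p ≤ R) {a : MvPolynomial (Fin n) K}
    (ha : φ a ∉ Subfield.closure (φ '' R)) :
    ∃ D : L → L, (∀ b, D (φ b) = ∑ j, φ (pderiv j b) * D (φ (X j))) ∧ D (φ a) = 1 ∧
      ∀ r ∈ R, D (φ r) = 0 := by
  classical
  set F := Subfield.closure (φ '' R)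
  have hRF (r) (hr : r ∈ R) : φ r ∈ F := Subfield.subset_closure ⟨r, hr, rfl⟩
  have hpow (b) : φ b ^ p ∈ F := map_pow φ b p ▸ hRF _ (hR (pow_mem_pPowers b))
  obtain ⟨E, D, hFE, hXE, hD, hDF, hDa⟩ :=
    F.exists_derivation_eq_one ha (hpow a) (Finset.univ.image fun j => φ (X j)) (by simp [hpow])
  have hAE (b) : φ b ∈ E := by
    induction b using MvPolynomial.induction_on with
    | C k => exact hFE (hRF _ (hR (C_mem_pPowers k)))
    | add q r hq hr => rw [map_add]; exact add_mem hq hr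
    | mul_X q j hq => rw [map_mul]; exact mul_mem hq (hXE (by simp))
  exact ⟨D, hD.map_eq_sum_pderiv φ hAE fun k => hDF _ (hRF _ (hR (C_mem_pPowers k))), hDa,
    fun r hr => hDF _ (hRF r hr)⟩

theorem exists_bfc_mem_prime_of_jac_subset_general
    {K : Type*} [CommRing K] [IsDomain K]
    (p : ℕ) (hp : 0 < p) [CharP K p] {n m : ℕ}
    (f : Fin m → MvPolynomial (Fin n) K)
    (Q : Ideal (MvPolynomial (Fin n) K)) (hQ : Q.IsPrime)
    (hjac : ∀ j : Fin m → Fin n, jacMinor f j ∈ Q) :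
    ∃ i : Fin m, ∃ b c : MvPolynomial (Fin n) K,
      b ∈ Ri K p f i ∧ c ∈ Ri K p f i ∧ b ∉ Q ∧ b * f i + c ∈ Q := by
  have : Fact p.Prime := ⟨CharP.char_prime_of_ne_zero K hp.ne'⟩
  let φ : MvPolynomial (Fin n) K →+* FractionRing (MvPolynomial (Fin n) K ⧸ Q) :=
    (algebraMap _ _).comp (Ideal.Quotient.mk Q)
  have hφ (a) : φ a = 0 ↔ a ∈ Q := by simp [φ, Ideal.Quotient.eq_zero_iff_mem]
  have : CharP (FractionRing (MvPolynomial (Fin n) K ⧸ Q)) p :=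
    (CharP.charP_iff_prime_eq_zero Fact.out).2 <| by
      rw [← map_natCast φ, CharP.cast_eq_zero, map_zero]
  by_contra! hcon
  have hD (i : Fin m) := exists_derivation_map_eq_one φ (pPowers_le_Ri f i) (a := f i) <| by
    intro hmem
    obtain ⟨b, hb, c, hc, hb0, hbc⟩ := exists_mul_add_map_eq_zero_of_map_mem_closure φ _ hmem
    exact hcon i b c hb hc (mt (hφ b).2 hb0) ((hφ _).1 hbc)
  choose D hchain hone hzero using hD
  obtain ⟨j, hj⟩ := exists_map_jacMinor_ne_zero φ f D hchain fun i l => by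
    split_ifs with h
    · exact h ▸ hone i
    · exact hzero i _ (mem_Ri_of_ne f h)
  exact hj ((hφ _).2 (hjac j))

/-- **Proposition 2.** If a prime ideal `Q` of `K[x₁,…,x_n]` contains every `m×m` jacobian
minor of `f₁,…,f_m`, then there exist `i` and `b, c ∈ K[x₁^p,…,x_n^p, f₁,…,f̂ᵢ,…,f_m]`
with `b ∉ Q` such that `b·fᵢ + c ∈ Q`. -/
theorem exists_bfc_mem_prime_of_jac_subset
    {K : Type*} [CommRing K] [IsDomain K] [UniqueFactorizationMonoid K]
    (p : ℕ) (hp : 0 < p) [CharP K p] {n m : ℕ} (hm : 1 ≤ m) (hn : 1 ≤ n)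
    (f : Fin m → MvPolynomial (Fin n) K)
    (Q : Ideal (MvPolynomial (Fin n) K)) (hQ : Q.IsPrime)
    (hjac : ∀ j : Fin m → Fin n, jacMinor f j ∈ Q) :
    ∃ i : Fin m, ∃ b c : MvPolynomial (Fin n) K,
      b ∈ Ri K p f i ∧ c ∈ Ri K p f i ∧ b ∉ Q ∧ b * f i + c ∈ Q :=
  exists_bfc_mem_prime_of_jac_subset_general p hp f Q hQ hjac
end

section
/- Let K be a UFD of characteristic p > 0, let A = K[x_1,…,x_n] be the polynomial algebra, let f_1,…,f_m ∈ A, and let Q be a prime ideal of A. Then the ideal ijac(f_1,…,f_m) generated by all m×m jacobian minors of f_1,…,f_m is contained in Q if and only if there exists an index i ∈ {1,…,m} for which the following condition (∗) holds: there exist s_1,…,s_m ∈ A with s_i ∉ Q such that s_1·d(f_1) + … + s_m·d(f_m) ∈ Q for every K-derivation d of A. -/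
/-! Modulo the prime `Q`, i.e. over the domain `A ⧸ Q`, all maximal minors of the jacobian matrix
`(∂fᵢ/∂xⱼ)` vanish iff its rows are linearly dependent: over the fraction field, independent rows
give a right inverse, and Cauchy–Binet then produces a nonzero minor. A dependence relation over
`A ⧸ Q` lifts to `s` with some `sᵢ ∉ Q`, and since every derivation is `d = ∑ⱼ d(xⱼ) ∂/∂xⱼ`,
these lifts are exactly the tuples `s` of condition (∗). -/

open MvPolynomial

namespace Matrix

variable {ι κ R : Type*} [Fintype ι] [DecidableEq ι] [Fintype κ]

-- Cauchy–Binet, with `j` ranging over all maps `ι → κ`: the non-injective ones give zero minors.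
theorem det_mul_eq_sum_prod_mul_det_submatrix [CommRing R] (M : Matrix ι κ R) (N : Matrix κ ι R) :
    (M * N).det = ∑ j : ι → κ, (∏ i, N (j i) i) * (M.submatrix id j).det := by
  have hrows : (Nᵀ * Mᵀ) = fun i => ∑ k, N k i • Mᵀ k := by
    ext i l
    simp [mul_apply, Finset.sum_apply]
  rw [← det_transpose, transpose_mul, hrows]
  refine ((detRowAlternating (R := R) (n := ι)).toMultilinearMap.map_sum _).trans
    (Finset.sum_congr rfl fun j _ => ?_)
  rw [AlternatingMap.coe_multilinearMap, AlternatingMap.map_smul_univ, smul_eq_mul,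
    ← det_transpose]
  rfl

theorem exists_mul_eq_one_of_linearIndependent_rows {F : Type*} [Field F] {M : Matrix ι κ F}
    (hM : LinearIndependent F M.row) : ∃ N : Matrix κ ι F, M * N = 1 := by
  classical
  have hvecMul : ⇑(toLin' Mᵀ) = fun v => v ᵥ* M := funext fun v => by simp [mulVec_transpose]
  obtain ⟨g, hg⟩ := (toLin' Mᵀ).exists_leftInverse_of_injective <| by
    rwa [LinearMap.ker_eq_bot, hvecMul, vecMul_injective_iff]
  refine ⟨(LinearMap.toMatrix' g)ᵀ, ?_⟩
  have hinv := congrArg LinearMap.toMatrix' hg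
  rw [LinearMap.toMatrix'_comp, LinearMap.toMatrix'_toLin', LinearMap.toMatrix'_id] at hinv
  rw [← transpose_transpose (M * _), transpose_mul, transpose_transpose, hinv, transpose_one]

theorem exists_det_submatrix_ne_zero_of_linearIndependent_rows {F : Type*} [Field F]
    {M : Matrix ι κ F} (hM : LinearIndependent F M.row) :
    ∃ j : ι → κ, (M.submatrix id j).det ≠ 0 := by
  obtain ⟨N, hN⟩ := exists_mul_eq_one_of_linearIndependent_rows hM
  by_contra! h
  have hCB := det_mul_eq_sum_prod_mul_det_submatrix M N
  simp [hN, h] at hCB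

theorem linearIndependent_rows_iff_exists_det_submatrix_ne_zero [CommRing R] [IsDomain R]
    {M : Matrix ι κ R} : LinearIndependent R M.row ↔ ∃ j : ι → κ, (M.submatrix id j).det ≠ 0 := by
  constructor
  · intro hM
    let K := FractionRing R
    have hinj : LinearMap.ker ((Algebra.linearMap R K).compLeft κ) = ⊥ :=
      LinearMap.ker_eq_bot.mpr ((IsFractionRing.injective R K).comp_left)
    have hMK : LinearIndependent K (M.map (algebraMap R K)).row :=
      (LinearIndependent.iff_fractionRing R K).mp (hM.map' _ hinj)
    obtain ⟨j, hj⟩ := exists_det_submatrix_ne_zero_of_linearIndependent_rows hMK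
    refine ⟨j, fun h => hj ?_⟩
    rw [submatrix_map, ← RingHom.mapMatrix_apply, ← RingHom.map_det, h, map_zero]
  · rintro ⟨j, hj⟩
    exact .of_comp (LinearMap.funLeft R R j) (linearIndependent_rows_of_det_ne_zero hj)

theorem forall_det_submatrix_mem_iff {A : Type*} [CommRing A] {Q : Ideal A} [Q.IsPrime]
    (M : Matrix ι κ A) : (∀ j : ι → κ, (M.submatrix id j).det ∈ Q) ↔
      ∃ i, ∃ s : ι → A, s i ∉ Q ∧ ∀ k, ∑ l, s l * M l k ∈ Q := by
  set π := Ideal.Quotient.mk Q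
  have hdet (j : ι → κ) : (M.submatrix id j).det ∈ Q ↔ ((M.map π).submatrix id j).det = 0 := by
    rw [submatrix_map, ← RingHom.mapMatrix_apply, ← RingHom.map_det,
      Ideal.Quotient.eq_zero_iff_mem]
  have hcomb (s : ι → A) : ∑ l, π (s l) • (M.map π).row l = 0 ↔ ∀ k, ∑ l, s l * M l k ∈ Q := by
    simp only [funext_iff, Finset.sum_apply, Pi.smul_apply, row_apply, map_apply, smul_eq_mul,
      Pi.zero_apply, ← map_mul, ← map_sum, Ideal.Quotient.eq_zero_iff_mem, π]
  have hsurj : Function.Surjective (π ∘ · : (ι → A) → ι → A ⧸ Q) :=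
    Ideal.Quotient.mk_surjective.comp_left
  calc (∀ j : ι → κ, (M.submatrix id j).det ∈ Q)
      ↔ ¬LinearIndependent (A ⧸ Q) (M.map π).row := by
        simp [hdet, linearIndependent_rows_iff_exists_det_submatrix_ne_zero]
    _ ↔ ∃ g : ι → A ⧸ Q, ∑ l, g l • (M.map π).row l = 0 ∧ ∃ i, g i ≠ 0 :=
        Fintype.not_linearIndependent_iff
    _ ↔ ∃ i, ∃ s : ι → A, s i ∉ Q ∧ ∀ k, ∑ l, s l * M l k ∈ Q := by
        simp only [hsurj.exists, Function.comp_apply, hcomb, ne_eq, Ideal.Quotient.eq_zero_iff_mem,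
          π]
        exact ⟨fun ⟨s, hs, i, hi⟩ => ⟨i, s, hi, hs⟩, fun ⟨i, s, hi, hs⟩ => ⟨s, hs, i, hi⟩⟩

end Matrix

theorem MvPolynomial.derivation_eq_sum_pderiv_smul {σ R M : Type*} [Fintype σ] [CommSemiring R]
    [AddCommMonoid M] [Module R M] [Module (MvPolynomial σ R) M]
    [IsScalarTower R (MvPolynomial σ R) M]
    (d : Derivation R (MvPolynomial σ R) M) (g : MvPolynomial σ R) :
    d g = ∑ i, pderiv i g • d (X i) := by
  classical
  let D : Derivation R (MvPolynomial σ R) M :=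
    ∑ i, (LinearMap.toSpanSingleton _ _ (d (X i))).compDer (pderiv i)
  have hD (g : MvPolynomial σ R) : D g = ∑ i, pderiv i g • d (X i) := by
    rw [← Derivation.coeFnAddMonoidHom_apply, map_sum, Finset.sum_apply]
    rfl
  have hdD : d = D := derivation_ext fun i => by simp [hD, pderiv_X, Pi.single_apply]
  exact (DFunLike.congr_fun hdD g).trans (hD g)

theorem MvPolynomial.sum_mul_derivation_mem_iff {σ R ι : Type*} [Fintype σ] [CommSemiring R]
    [Fintype ι] {I : Ideal (MvPolynomial σ R)} (s f : ι → MvPolynomial σ R) :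
    (∀ d : Derivation R (MvPolynomial σ R) (MvPolynomial σ R), ∑ l, s l * d (f l) ∈ I) ↔
      ∀ k, ∑ l, s l * pderiv k (f l) ∈ I := by
  refine ⟨fun h k => h (pderiv k), fun h d => ?_⟩
  have hexpand : ∑ l, s l * d (f l) = ∑ k, (∑ l, s l * pderiv k (f l)) * d (X k) := by
    simp only [Finset.sum_mul]
    rw [Finset.sum_comm]
    refine Finset.sum_congr rfl fun l _ => ?_
    rw [derivation_eq_sum_pderiv_smul d (f l), Finset.mul_sum]
    simp only [smul_eq_mul, mul_assoc]
  rw [hexpand]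
  exact I.sum_mem fun k _ => I.mul_mem_right _ (h k)

theorem ijac_le_prime_iff_general
    {K : Type*} [CommRing K] {n m : ℕ}
    (f : Fin m → MvPolynomial (Fin n) K)
    (Q : Ideal (MvPolynomial (Fin n) K)) (hQ : Q.IsPrime) :
    Ideal.span (Set.range fun j : Fin m → Fin n => jacMinor f j) ≤ Q ↔
      ∃ i : Fin m, ∃ s : Fin m → MvPolynomial (Fin n) K, s i ∉ Q ∧
        ∀ d : Derivation K (MvPolynomial (Fin n) K) (MvPolynomial (Fin n) K),
          (∑ l, s l * d (f l)) ∈ Q := by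
  simp_rw [Ideal.span_le, Set.range_subset_iff, SetLike.mem_coe, sum_mul_derivation_mem_iff]
  exact Matrix.forall_det_submatrix_mem_iff (Matrix.of fun i k => pderiv k (f i))

/-- **Proposition 1 a).** The ideal `ijac(f₁,…,f_m)` generated by all `m×m` jacobian minors
is contained in a prime ideal `Q` iff for some index `i` the condition `(∗)` holds: there
are `s₁,…,s_m ∈ A` with `sᵢ ∉ Q` and `s₁·d(f₁) + … + s_m·d(f_m) ∈ Q` for every
`K`-derivation `d` of `A`. -/
theorem ijac_le_prime_iff
    {K : Type*} [CommRing K] [IsDomain K] [UniqueFactorizationMonoid K]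
    (p : ℕ) (hp : 0 < p) [CharP K p] {n m : ℕ}
    (f : Fin m → MvPolynomial (Fin n) K)
    (Q : Ideal (MvPolynomial (Fin n) K)) (hQ : Q.IsPrime) :
    Ideal.span (Set.range fun j : Fin m → Fin n => jacMinor f j) ≤ Q ↔
      ∃ i : Fin m, ∃ s : Fin m → MvPolynomial (Fin n) K, s i ∉ Q ∧
        ∀ d : Derivation K (MvPolynomial (Fin n) K) (MvPolynomial (Fin n) K),
          (∑ l, s l * d (f l)) ∈ Q :=
  ijac_le_prime_iff_general f Q hQ
end

section
/- Let A be a domain of characteristic p > 0 and B a subring of A containing A^p = {a^p : a ∈ A}. For elements f_1,…,f_m ∈ A consider the conditions: (1) f_1,…,f_m form a p-basis over B of the ring of constants of some B-derivation of A; (2) f_1,…,f_m are p-independent over B and B[f_1,…,f_m] is the ring of constants of some B-derivation of A; (3) f_1,…,f_m are p-independent over B and C_B(f_1,…,f_m) = B[f_1,…,f_m]; (4) f_1,…,f_m form a p-basis of C_B(f_1,…,f_m) over B. Then (1) ⇔ (2), (2) ⇒ (3), and (3) ⇔ (4). -/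
section Aux
variable {A : Type*} [CommRing A] {m p : ℕ}

/-- The set of `B`-linear combinations of `p`-monomials. -/
def InSpan (B : Subring A) (f : Fin m → A) (p : ℕ) (a : A) : Prop :=
  ∃ b : (Fin m → Fin p) → A, (∀ α, b α ∈ B) ∧ a = ∑ α : Fin m → Fin p, b α * pMonomial f α

variable {B : Subring A} {f : Fin m → A}

lemma pMonomial_zero (hp : 0 < p) : pMonomial f (fun _ => (⟨0, hp⟩ : Fin p)) = 1 := by
  simp [pMonomial]

lemma pMonomial_single (hp1 : 1 < p) (i : Fin m) :
    pMonomial f (fun j => if j = i then (⟨1, hp1⟩ : Fin p) else ⟨0, Nat.lt_of_lt_of_le Nat.one_pos hp1.le⟩) = f i := by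
  unfold pMonomial
  rw [Finset.prod_eq_single i]
  · simp
  · intro j _ hj; simp [hj]
  · simp

lemma inSpan_single {b : A} (hb : b ∈ B) (α : Fin m → Fin p) :
    InSpan B f p (b * pMonomial f α) := by
  refine ⟨fun β => if β = α then b else 0, fun β => by by_cases h : β = α <;> simp [h, hb, B.zero_mem], ?_⟩
  rw [Finset.sum_eq_single α]
  · simp
  · intro β _ hβ; simp [hβ]
  · simp

lemma inSpan_sum_mul {K : Type*} [Fintype K] (c : K → A) (γ : K → Fin m → Fin p)
    (hc : ∀ k, c k ∈ B) : InSpan B f p (∑ k, c k * pMonomial f (γ k)) := by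
  refine ⟨fun α => ∑ k, if γ k = α then c k else 0,
    fun α => Subring.sum_mem _ (fun k _ => by split <;> first | exact hc k | exact B.zero_mem), ?_⟩
  have key : ∀ α : Fin m → Fin p,
      (∑ k, if γ k = α then c k else 0) * pMonomial f α
        = ∑ k, if γ k = α then c k * pMonomial f α else 0 := by
    intro α
    rw [Finset.sum_mul]
    exact Finset.sum_congr rfl fun k _ => by split <;> simp
  simp_rw [key]
  rw [Finset.sum_comm]
  refine Finset.sum_congr rfl fun k _ => ?_
  rw [Finset.sum_ite_eq]
  simp

lemma pMonomial_mul (hp : 0 < p) (hB : ∀ a : A, a ^ p ∈ B) (α β : Fin m → Fin p) :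
    ∃ c ∈ B, pMonomial f α * pMonomial f β =
      c * pMonomial f (fun i => (⟨((α i : ℕ) + β i) % p, Nat.mod_lt _ hp⟩ : Fin p)) := by
  refine ⟨(∏ i, f i ^ (((α i : ℕ) + β i) / p)) ^ p, hB _, ?_⟩
  rw [← Finset.prod_pow]
  unfold pMonomial
  rw [← Finset.prod_mul_distrib, ← Finset.prod_mul_distrib]
  refine Finset.prod_congr rfl fun i _ => ?_
  rw [← pow_add, ← pow_mul, ← pow_add]
  congr 1
  show (α i : ℕ) + β i = ((α i : ℕ) + β i) / p * p + ((α i : ℕ) + β i) % p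
  exact (Nat.div_add_mod' _ _).symm

end Aux

section Aux2
variable {A : Type*} [CommRing A] {m p : ℕ} {B : Subring A} {f : Fin m → A}

lemma inSpan_add {x y : A} (hx : InSpan B f p x) (hy : InSpan B f p y) :
    InSpan B f p (x + y) := by
  obtain ⟨b, hb, rfl⟩ := hx
  obtain ⟨c, hc, rfl⟩ := hy
  refine ⟨b + c, fun α => B.add_mem (hb α) (hc α), ?_⟩
  rw [← Finset.sum_add_distrib]
  exact Finset.sum_congr rfl fun α _ => by simp [add_mul]

lemma inSpan_neg {x : A} (hx : InSpan B f p x) : InSpan B f p (-x) := by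
  obtain ⟨b, hb, rfl⟩ := hx
  exact ⟨fun α => -(b α), fun α => B.neg_mem (hb α), by simp [neg_mul]⟩

lemma inSpan_zero : InSpan B f p (0 : A) :=
  ⟨0, fun _ => B.zero_mem, by simp⟩

lemma inSpan_mul (hp : 0 < p) (hB : ∀ a : A, a ^ p ∈ B) {x y : A}
    (hx : InSpan B f p x) (hy : InSpan B f p y) : InSpan B f p (x * y) := by
  obtain ⟨b, hb, rfl⟩ := hx
  obtain ⟨c, hc, rfl⟩ := hy
  choose d hd hmul using pMonomial_mul (f := f) hp hB
  have key : (∑ α : Fin m → Fin p, b α * pMonomial f α) *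
        (∑ β : Fin m → Fin p, c β * pMonomial f β)
      = ∑ k : (Fin m → Fin p) × (Fin m → Fin p),
          (b k.1 * c k.2 * d k.1 k.2) *
            pMonomial f (fun i => (⟨((k.1 i : ℕ) + k.2 i) % p, Nat.mod_lt _ hp⟩ : Fin p)) := by
    rw [Finset.sum_mul_sum, Fintype.sum_prod_type]
    refine Finset.sum_congr rfl fun α _ => Finset.sum_congr rfl fun β _ => ?_
    rw [mul_mul_mul_comm, hmul α β, ← mul_assoc]
  rw [key]
  exact inSpan_sum_mul _ _ fun k => B.mul_mem (B.mul_mem (hb _) (hc _)) (hd _ _)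

lemma mem_closure_iff_inSpan (hp : 0 < p) (hp1 : 1 < p) (hB : ∀ a : A, a ^ p ∈ B) (a : A) :
    a ∈ Subring.closure (↑B ∪ Set.range f) ↔ InSpan B f p a := by
  constructor
  · intro h
    induction h using Subring.closure_induction with
    | mem x hx =>
      rcases hx with hx | ⟨i, rfl⟩
      · have := inSpan_single (f := f) hx (fun _ => (⟨0, hp⟩ : Fin p))
        rwa [pMonomial_zero hp, mul_one] at this
      · have := inSpan_single (f := f) B.one_mem
          (fun j => if j = i then (⟨1, hp1⟩ : Fin p)
            else ⟨0, Nat.lt_of_lt_of_le Nat.one_pos hp1.le⟩)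
        rwa [pMonomial_single hp1, one_mul] at this
    | zero => exact inSpan_zero
    | one =>
      have := inSpan_single (f := f) B.one_mem (fun _ => (⟨0, hp⟩ : Fin p))
      rwa [pMonomial_zero hp, mul_one] at this
    | add x y _ _ hx hy => exact inSpan_add hx hy
    | neg x _ hx => exact inSpan_neg hx
    | mul x y _ _ hx hy => exact inSpan_mul hp hB hx hy
  · rintro ⟨b, hb, rfl⟩
    refine Subring.sum_mem _ fun α _ => Subring.mul_mem _
      (Subring.subset_closure (Set.mem_union_left _ (hb α))) ?_
    unfold pMonomial
    exact Subring.prod_mem _ fun i _ =>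
      Subring.pow_mem _ (Subring.subset_closure (Set.mem_union_right _ (Set.mem_range_self i))) _

end Aux2

/-- The kernel of a `B`-derivation, as a subring. -/
def kerD {A : Type*} [CommRing A] {B : Subring A} {d : A → A} (hd : IsBDerivation B d) :
    Subring A where
  carrier := {a | d a = 0}
  zero_mem' := hd.2.2 0 B.zero_mem
  one_mem' := hd.2.2 1 B.one_mem
  add_mem' := fun {x y} hx hy => by
    simp only [Set.mem_setOf_eq] at *
    rw [hd.1, hx, hy, add_zero]
  mul_mem' := fun {x y} hx hy => by
    simp only [Set.mem_setOf_eq] at *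
    rw [hd.2.1, hx, hy, mul_zero, mul_zero, add_zero]
  neg_mem' := fun {x} hx => by
    simp only [Set.mem_setOf_eq] at *
    have h := hd.1 x (-x)
    rw [add_neg_cancel, hd.2.2 0 B.zero_mem, hx, zero_add] at h
    exact h.symm

/-- **Lemma 1.** For elements `f₁,…,f_m` of a domain `A` of characteristic `p > 0` and a
subring `B ⊇ Aᵖ`: (1) ⇔ (2), (2) ⇒ (3), (3) ⇔ (4). -/
theorem pBasis_conditions
    {A : Type*} [CommRing A] [IsDomain A] (p : ℕ) (hp : 0 < p) [CharP A p]
    (B : Subring A) (hB : ∀ a : A, a ^ p ∈ B) {m : ℕ} (f : Fin m → A) :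
    -- (1) ⇔ (2)
    ((∃ d : A → A, IsBDerivation B d ∧ IsPBasis B {a | d a = 0} p f) ↔
      (pIndependent B p f ∧ ∃ d : A → A, IsBDerivation B d ∧
        {a | d a = 0} = ↑(Subring.closure (↑B ∪ Set.range f)))) ∧
    -- (2) ⇒ (3)
    ((pIndependent B p f ∧ ∃ d : A → A, IsBDerivation B d ∧
        {a | d a = 0} = ↑(Subring.closure (↑B ∪ Set.range f))) →
      (pIndependent B p f ∧ CB B f = ↑(Subring.closure (↑B ∪ Set.range f)))) ∧
    -- (3) ⇔ (4)
    ((pIndependent B p f ∧ CB B f = ↑(Subring.closure (↑B ∪ Set.range f))) ↔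
      IsPBasis B (CB B f) p f) := by
  have hp1 : 1 < p :=
    ((CharP.char_is_prime_or_zero A p).resolve_right hp.ne').one_lt
  set R := Subring.closure (↑B ∪ Set.range f) with hR
  have hmemR : ∀ a : A, a ∈ R ↔ InSpan B f p a := mem_closure_iff_inSpan hp hp1 hB
  have hBR : ∀ b ∈ B, b ∈ R := fun b hb =>
    Subring.subset_closure (Set.mem_union_left _ hb)
  have hfR : ∀ i, f i ∈ R := fun i =>
    Subring.subset_closure (Set.mem_union_right _ (Set.mem_range_self i))
  have hMonR : ∀ α : Fin m → Fin p, pMonomial f α ∈ R := fun α => by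
    unfold pMonomial
    exact Subring.prod_mem _ fun i _ => Subring.pow_mem _ (hfR i) _
  have hRsubCB : (R : Set A) ⊆ CB B f := fun a ha =>
    ⟨1, a, Subring.one_mem _, ha, one_ne_zero, mul_one a⟩
  have hPBR : pIndependent B p f → IsPBasis B (↑R) p f := fun hind =>
    ⟨fun b hb => hBR b hb, hMonR, hind, fun r hr => (hmemR r).mp hr⟩
  refine ⟨⟨?_, ?_⟩, ?_, ⟨?_, ?_⟩⟩
  · -- (1) → (2)
    rintro ⟨d, hd, hB0, hmon, hind, hspan⟩
    refine ⟨hind, d, hd, ?_⟩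
    apply Set.Subset.antisymm
    · intro a ha
      obtain ⟨b, hb, he⟩ := hspan a ha
      exact (hmemR a).mpr ⟨b, hb, he⟩
    · have hRker : R ≤ kerD hd := by
        rw [hR]
        apply Subring.closure_le.mpr
        rintro x (hx | ⟨i, rfl⟩)
        · exact hd.2.2 x hx
        · have := hmon (fun j => if j = i then (⟨1, hp1⟩ : Fin p)
            else ⟨0, Nat.lt_of_lt_of_le Nat.one_pos hp1.le⟩)
          rwa [pMonomial_single hp1] at this
      exact fun a ha => hRker ha
  · -- (2) → (1)
    rintro ⟨hind, d, hd, hker⟩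
    refine ⟨d, hd, ?_⟩
    rw [hker]
    exact hPBR hind
  · -- (2) → (3)
    rintro ⟨hind, d, hd, hker⟩
    have hkd : ∀ x, x ∈ R → d x = 0 := fun x hx =>
      show x ∈ {a | d a = 0} by rw [hker]; exact hx
    refine ⟨hind, Set.Subset.antisymm ?_ hRsubCB⟩
    rintro a ⟨s, t, hs, ht, hs0, hast⟩
    have hsda : s * d a = 0 := by
      have h := hd.2.1 a s
      rw [hast, hkd t ht, hkd s hs, mul_zero, zero_add] at h
      exact h.symm
    have hda : d a = 0 := by
      rcases mul_eq_zero.mp hsda with h | h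
      · exact absurd h hs0
      · exact h
    show a ∈ (R : Set A)
    rw [← hker]
    exact hda
  · -- (3) → (4)
    rintro ⟨hind, hCB⟩
    rw [hCB]
    exact hPBR hind
  · -- (4) → (3)
    rintro ⟨hBsub, hmon, hind, hspan⟩
    refine ⟨hind, Set.Subset.antisymm ?_ hRsubCB⟩
    intro a ha
    obtain ⟨b, hb, he⟩ := hspan a ha
    exact (hmemR a).mpr ⟨b, hb, he⟩
end

section
/- Let A be a domain of characteristic p > 0 and B a subring of A containing A^p. If elements f_1,…,f_m ∈ A form a p-basis of C_B(f_1,…,f_m) over B, then B_0 ∩ A = B, where B_0 is the field of fractions of B inside Frac(A). -/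
/-- **Lemma 3.** If `f₁,…,f_m` form a `p`-basis of `C_B(f₁,…,f_m)` over `B`, then
`B₀ ∩ A = B`. -/
theorem B0_cap_eq_of_pBasis
    {A : Type*} [CommRing A] [IsDomain A] (p : ℕ) (hp : 0 < p) [CharP A p]
    (B : Subring A) (hB : ∀ a : A, a ^ p ∈ B)
    {m : ℕ} (f : Fin m → A) (hbasis : IsPBasis B (CB B f) p f) :
    {a : A | ∃ b c : A, b ∈ B ∧ c ∈ B ∧ b ≠ 0 ∧ a * b = c} = ↑B := by
  haveI : NeZero p := ⟨hp.ne'⟩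
  ext a
  simp only [Set.mem_setOf_eq, SetLike.mem_coe]
  constructor
  · rintro ⟨b, c, hb, hc, hb0, habc⟩
    have haCB : a ∈ CB B f :=
      ⟨b, c, Subring.subset_closure (Or.inl hb), Subring.subset_closure (Or.inl hc), hb0, habc⟩
    obtain ⟨-, -, hind, hspan⟩ := hbasis
    obtain ⟨g, hg, hgeq⟩ := hspan a haCB
    set α0 : Fin m → Fin p := fun _ => 0 with hα0
    have hmon0 : pMonomial f α0 = 1 := by simp [pMonomial, hα0]
    set d : (Fin m → Fin p) → A := fun α => b * g α - if α = α0 then c else 0 with hd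
    have hdmem : ∀ α, d α ∈ B := by
      intro α
      by_cases h : α = α0 <;> simp only [hd, h, if_true, if_false, reduceIte] <;>
        [exact B.sub_mem (B.mul_mem hb (hg _)) hc;
         simpa using B.mul_mem hb (hg _)]
    have hsum : ∑ α : Fin m → Fin p, d α * pMonomial f α = 0 := by
      simp only [hd, sub_mul, Finset.sum_sub_distrib, ite_mul, zero_mul]
      rw [Finset.sum_ite_eq' Finset.univ α0 (fun α => c * pMonomial f α)]
      simp only [Finset.mem_univ, if_true, hmon0, mul_one, mul_assoc]
      rw [← Finset.mul_sum, ← hgeq, mul_comm, habc, sub_self]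
    have h0 := hind d hdmem hsum α0
    have hc' : c = b * g α0 := by
      have := h0
      simp only [hd, if_pos rfl] at this
      exact (sub_eq_zero.mp this).symm
    have : (a - g α0) * b = 0 := by
      rw [sub_mul, habc, hc', mul_comm b (g α0)]
      ring
    rcases mul_eq_zero.mp this with h | h
    · rw [sub_eq_zero] at h
      rw [h]; exact hg α0
    · exact absurd h hb0
  · intro ha
    exact ⟨1, a, B.one_mem, ha, one_ne_zero, mul_one a⟩
end

section
/- Let K be a UFD of characteristic p > 0, A = K[x_1,…,x_n] the polynomial algebra, and f_1,…,f_m ∈ A. For any pairwise distinct indices i_1,…,i_r ∈ {1,…,m} with 1 ≤ r ≤ m, if dgcd(f_{i_1},…,f_{i_r}) ≠ 0, then dgcd(f_{i_1},…,f_{i_r}) divides dgcd(f_1,…,f_m). -/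
open MvPolynomial

private theorem jac_aux {K : Type*} [CommRing K] {n r : ℕ}
    (d : MvPolynomial (Fin n) K) :
    ∀ (m : ℕ) (f : Fin m → MvPolynomial (Fin n) K) (idx : Fin r → Fin m),
      Function.Injective idx →
      (∀ j : Fin r → Fin n, d ∣ jacMinor (f ∘ idx) j) →
      ∀ j : Fin m → Fin n, d ∣ jacMinor f j := by
  intro m
  induction m with
  | zero =>
    intro f idx hinj hdvd j
    rcases Nat.eq_zero_or_pos r with hr0 | hr0
    · subst hr0
      have h1 : d ∣ jacMinor (f ∘ idx) (Fin.elim0) := hdvd _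
      simp only [jacMinor, Matrix.det_fin_zero] at h1 ⊢
      exact h1
    · exact (idx ⟨0, hr0⟩).elim0
  | succ m ih =>
    intro f idx hinj hdvd j
    by_cases hsur : Function.Surjective idx
    · -- permutation case: r = m + 1 up to bijection
      have hbij : Function.Bijective idx := ⟨hinj, hsur⟩
      let eIdx : Fin r ≃ Fin (m + 1) := Equiv.ofBijective idx hbij
      have key : jacMinor f j = jacMinor (f ∘ idx) (j ∘ eIdx) := by
        unfold jacMinor
        rw [← Matrix.det_submatrix_equiv_self eIdx.symm
          (Matrix.of fun i l => pderiv ((j ∘ eIdx) l) ((f ∘ idx) i))]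
        congr 1
        ext i l
        have h1 : idx (eIdx.symm i) = i := eIdx.apply_symm_apply i
        have h2 : (eIdx : Fin r → Fin (m+1)) (eIdx.symm l) = l := eIdx.apply_symm_apply l
        simp only [Matrix.submatrix_apply, Matrix.of_apply, Function.comp_apply, h1, h2]
      rw [key]
      exact hdvd _
    · -- expansion case
      rw [Function.Surjective] at hsur
      push_neg at hsur
      obtain ⟨i0, hi0⟩ := hsur
      have hspec : ∀ k, ∃ a, i0.succAbove a = idx k := fun k =>
        Fin.exists_succAbove_eq (hi0 k)
      set idx' : Fin r → Fin m := fun k => Classical.choose (hspec k) with hidx'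
      have hcomp : ∀ k, i0.succAbove (idx' k) = idx k := fun k =>
        Classical.choose_spec (hspec k)
      have hfeq : (f ∘ i0.succAbove) ∘ idx' = f ∘ idx := by
        funext k; simp [Function.comp, hcomp k]
      have hinj' : Function.Injective idx' := by
        intro a b hab
        apply hinj
        rw [← hcomp a, ← hcomp b, hab]
      have hdvd' : ∀ j' : Fin r → Fin n, d ∣ jacMinor ((f ∘ i0.succAbove) ∘ idx') j' := by
        intro j'; rw [hfeq]; exact hdvd j'
      show d ∣ (Matrix.of fun i l => pderiv (j l) (f i)).det
      rw [Matrix.det_succ_row _ i0]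
      apply Finset.dvd_sum
      intro l _
      apply dvd_mul_of_dvd_right
      exact ih (f ∘ i0.succAbove) idx' hinj' hdvd' (j ∘ l.succAbove)

/-- **Lemma 4 b).** For pairwise distinct indices `i₁,…,i_r`, if `d` is a gcd of all `r×r`
jacobian minors of `f_{i₁},…,f_{i_r}` and `d ≠ 0` (i.e. `dgcd(f_{i₁},…,f_{i_r}) ≠ 0`),
then `d` divides every `m×m` jacobian minor of `f₁,…,f_m`, i.e.
`dgcd(f_{i₁},…,f_{i_r}) ∣ dgcd(f₁,…,f_m)`. -/
theorem dgcd_subfamily_dvd_dgcd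
    {K : Type*} [CommRing K] [IsDomain K] [UniqueFactorizationMonoid K]
    (p : ℕ) (hp : 0 < p) [CharP K p] {n m r : ℕ} (hr : 1 ≤ r) (hrm : r ≤ m)
    (f : Fin m → MvPolynomial (Fin n) K)
    (idx : Fin r → Fin m) (hidx : Function.Injective idx)
    (d : MvPolynomial (Fin n) K)
    (hdvd : ∀ j : Fin r → Fin n, d ∣ jacMinor (f ∘ idx) j)
    (hgcd : ∀ e : MvPolynomial (Fin n) K,
      (∀ j : Fin r → Fin n, e ∣ jacMinor (f ∘ idx) j) → e ∣ d)
    (hd : d ≠ 0) :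
    ∀ j : Fin m → Fin n, d ∣ jacMinor f j := by
  exact fun j => jac_aux d m f idx hidx hdvd j
end

section
/- Let A be a UFD of characteristic p > 0 and B a subring of A containing A^p. If an element f ∈ A forms a (one-element) p-basis of C_B(f) over B, then for every b,c ∈ B with b ≠ 0 and gcd(b,c) a unit, the element b·f + c is square-free and B-free. -/
/-- Collapse a sum over `Fin 1 → Fin p` of one-variable monomial terms to a sum over `Fin p`. -/
lemma sum_funUnique_pMonomial {S : Type*} [CommRing S] {p : ℕ} (f : S) (c : Fin p → S) :
    ∑ α : Fin 1 → Fin p, c (α 0) * pMonomial (fun _ : Fin 1 => f) α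
      = ∑ k : Fin p, c k * f ^ (k : ℕ) := by
  rw [Fintype.sum_equiv (Equiv.funUnique (Fin 1) (Fin p)) _ (fun k => c k * f ^ (k : ℕ))]
  intro α
  simp [pMonomial, Equiv.funUnique]

/-- Key divisibility lemma: if `s ∈ B`, `s ≠ 0` and `s` divides `(b f + c)^(p-1)` in `A`,
then `s` divides both `b^(p-1)` and `c^(p-1)`. -/
lemma key_dvd {A : Type*} [CommRing A] [IsDomain A]
    {p : ℕ} (hp2 : 2 ≤ p)
    {B : Subring A} {f : A}
    (hbasis : IsPBasis B (CB B (fun _ : Fin 1 => f)) p (fun _ : Fin 1 => f))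
    {b c : A} (hb : b ∈ B) (hc : c ∈ B)
    {s : A} (hs : s ∈ B) (hs0 : s ≠ 0)
    {a : A} (ha : a * s = (b * f + c) ^ (p - 1)) :
    s ∣ b ^ (p - 1) ∧ s ∣ c ^ (p - 1) := by
  set K := Subring.closure ((B : Set A) ∪ Set.range (fun _ : Fin 1 => f)) with hK
  have hbK : ∀ x ∈ B, x ∈ K := fun x hx => Subring.subset_closure (Or.inl hx)
  have hfK : f ∈ K := Subring.subset_closure (Or.inr ⟨0, rfl⟩)
  have huK : (b * f + c) ^ (p - 1) ∈ K :=
    pow_mem (add_mem (mul_mem (hbK b hb) hfK) (hbK c hc)) _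
  have haCB : a ∈ CB B (fun _ : Fin 1 => f) :=
    ⟨s, (b * f + c) ^ (p - 1), hbK s hs, huK, hs0, ha⟩
  obtain ⟨g, hg, hga⟩ := hbasis.2.2.2 a haCB
  -- binomial expansion
  have hexp : (b * f + c) ^ (p - 1)
      = ∑ k : Fin p, (((p - 1).choose (k : ℕ) : A) * b ^ (k : ℕ) * c ^ (p - 1 - (k : ℕ)))
          * f ^ (k : ℕ) := by
    have h1 : (p - 1) + 1 = p := by omega
    rw [add_pow, h1, ← Fin.sum_univ_eq_sum_range
      (fun k => (b * f) ^ k * c ^ (p - 1 - k) * ((p - 1).choose k : A)) p]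
    apply Finset.sum_congr rfl
    intro k _
    ring
  -- the coefficient function
  set d : (Fin 1 → Fin p) → A := fun α =>
    s * g α - (((p - 1).choose ((α 0 : ℕ)) : A) * b ^ ((α 0 : ℕ)) * c ^ (p - 1 - (α 0 : ℕ)))
    with hd
  have hdB : ∀ α, d α ∈ B := by
    intro α
    exact sub_mem (mul_mem hs (hg α))
      (mul_mem (mul_mem (natCast_mem B _) (pow_mem hb _)) (pow_mem hc _))
  have hdsum : ∑ α : Fin 1 → Fin p, d α * pMonomial (fun _ : Fin 1 => f) α = 0 := by
    have : ∀ α : Fin 1 → Fin p, d α * pMonomial (fun _ : Fin 1 => f) α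
        = s * (g α * pMonomial (fun _ : Fin 1 => f) α)
          - (((p - 1).choose ((α 0 : ℕ)) : A) * b ^ ((α 0 : ℕ)) * c ^ (p - 1 - (α 0 : ℕ)))
              * pMonomial (fun _ : Fin 1 => f) α := by
      intro α; rw [hd]; ring
    rw [Finset.sum_congr rfl (fun α _ => this α), Finset.sum_sub_distrib, ← Finset.mul_sum,
      ← hga]
    rw [sum_funUnique_pMonomial f
      (fun k => ((p - 1).choose (k : ℕ) : A) * b ^ (k : ℕ) * c ^ (p - 1 - (k : ℕ)))]
    rw [← hexp, mul_comm, ha, sub_self]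
  have hzero := hbasis.2.2.1 d hdB hdsum
  constructor
  · have h1 := hzero (fun _ => ⟨p - 1, by omega⟩)
    rw [hd] at h1
    simp only [Nat.choose_self, Nat.cast_one, one_mul, Nat.sub_self, pow_zero, mul_one,
      sub_eq_zero] at h1
    exact ⟨g (fun _ => ⟨p - 1, by omega⟩), h1.symm⟩
  · have h1 := hzero (fun _ => ⟨0, by omega⟩)
    rw [hd] at h1
    simp only [Nat.choose_zero_right, Nat.cast_one, one_mul, pow_zero, Nat.sub_zero,
      sub_eq_zero] at h1
    exact ⟨g (fun _ => ⟨0, by omega⟩), h1.symm⟩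

/-- **Lemma 6 a).** If `f ∈ A` forms a one-element `p`-basis of `C_B(f)` over `B`, then for
all `b, c ∈ B` with `b ≠ 0` and `gcd(b,c) ∼ 1`, the element `b·f + c` is square-free and
`B`-free. -/
theorem squarefree_and_BFree_of_pBasis_one
    {A : Type*} [CommRing A] [IsDomain A] [UniqueFactorizationMonoid A]
    (p : ℕ) (hp : 0 < p) [CharP A p]
    (B : Subring A) (hB : ∀ a : A, a ^ p ∈ B) (f : A)
    (hbasis : IsPBasis B (CB B (fun _ : Fin 1 => f)) p (fun _ : Fin 1 => f)) :
    ∀ b c : A, b ∈ B → c ∈ B → b ≠ 0 → IsRelPrime b c →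
      Squarefree (b * f + c) ∧ BFree B (b * f + c) := by
  have hpn : p ≠ 0 := hp.ne'
  have hpp : p.Prime := CharP.char_prime_of_ne_zero A hpn
  have hp2 : 2 ≤ p := hpp.two_le
  intro b c hb hc hb0 hrel
  set u := b * f + c with hu
  -- `u ≠ 0` via `p`-independence
  have hu0 : u ≠ 0 := by
    intro h
    set e1 : Fin p := ⟨1, by omega⟩ with he1
    set e0 : Fin p := ⟨0, by omega⟩ with he0
    have hne : e1 ≠ e0 := by simp [he1, he0, Fin.ext_iff]
    set d : (Fin 1 → Fin p) → A := fun α =>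
      if α 0 = e1 then b else if α 0 = e0 then c else 0 with hd
    have hdB : ∀ α, d α ∈ B := by
      intro α; rw [hd]; dsimp only
      split_ifs <;> first | exact hb | exact hc | exact zero_mem B
    have hdsum : ∑ α : Fin 1 → Fin p, d α * pMonomial (fun _ : Fin 1 => f) α = 0 := by
      rw [sum_funUnique_pMonomial f (fun k => if k = e1 then b else if k = e0 then c else 0)]
      have step : ∀ k : Fin p,
          (if k = e1 then b else if k = e0 then c else 0) * f ^ (k : ℕ)
            = (if k = e1 then b * f ^ (k : ℕ) else 0)
              + (if k = e0 then c * f ^ (k : ℕ) else 0) := by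
        intro k
        by_cases h1 : k = e1
        · subst h1; simp [hne]
        · by_cases h0 : k = e0 <;> simp [h1, h0, Ne.symm hne]
      rw [Finset.sum_congr rfl (fun k _ => step k), Finset.sum_add_distrib,
        Finset.sum_ite_eq' Finset.univ e1 (fun k => b * f ^ (k : ℕ)),
        Finset.sum_ite_eq' Finset.univ e0 (fun k => c * f ^ (k : ℕ))]
      simp only [Finset.mem_univ, if_true, he1, he0]
      simpa using h
    have := hbasis.2.2.1 d hdB hdsum (fun _ => e1)
    rw [hd] at this
    simp at this
    exact hb0 this
  constructor
  · -- squarefree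
    intro x hx2'
    by_contra hxu
    have hx2 : x ^ 2 ∣ u := by rwa [pow_two]
    have hx0 : x ≠ 0 := by
      rintro rfl
      exact hu0 (by simpa using hx2)
    obtain ⟨q, hqirr, hqx⟩ := WfDvdMonoid.exists_irreducible_factor hxu hx0
    have hq : Prime q := (UniqueFactorizationMonoid.irreducible_iff_prime).mp hqirr
    have hq2u : q ^ 2 ∣ u := dvd_trans (pow_dvd_pow_of_dvd hqx 2) hx2
    have hqu : q ∣ u := dvd_trans (dvd_pow_self q (by norm_num)) hq2u
    -- q^p ∣ u^(p-1)
    have hdvd : q ^ p ∣ u ^ (p - 1) := by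
      have h1 : (q ^ 2) ^ (p - 1) ∣ u ^ (p - 1) := pow_dvd_pow_of_dvd hq2u _
      have h2 : q ^ p ∣ (q ^ 2) ^ (p - 1) := by
        rw [← pow_mul]; exact pow_dvd_pow q (by omega)
      exact h2.trans h1
    obtain ⟨a, haa⟩ := hdvd
    have ha' : a * q ^ p = u ^ (p - 1) := by rw [mul_comm, ← haa]
    have hsB : q ^ p ∈ B := hB q
    have hs0 : q ^ p ≠ 0 := pow_ne_zero _ hq.ne_zero
    obtain ⟨hdb, _⟩ := key_dvd hp2 hbasis hb hc hsB hs0 ha'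
    have hqb : q ∣ b := by
      have hq1 : q ∣ q ^ p := dvd_pow_self q hpn
      exact hq.dvd_of_dvd_pow (hq1.trans hdb)
    have hqc : q ∣ c := by
      have h2 : q ∣ b * f := hqb.mul_right f
      have h3 := dvd_sub hqu h2
      have h4 : u - b * f = c := by rw [hu]; ring
      rwa [h4] at h3
    exact hq.not_unit (hrel hqb hqc)
  · -- B-free
    intro e he hedvd
    by_contra heu
    have he0 : e ≠ 0 := by
      rintro rfl
      exact hu0 (zero_dvd_iff.mp hedvd)
    obtain ⟨v, hv⟩ := hedvd
    have ha' : v ^ (p - 1) * e ^ (p - 1) = u ^ (p - 1) := by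
      rw [← mul_pow, mul_comm v e, ← hv]
    have hsB : e ^ (p - 1) ∈ B := pow_mem he _
    have hs0 : e ^ (p - 1) ≠ 0 := pow_ne_zero _ he0
    obtain ⟨hdb, hdc⟩ := key_dvd hp2 hbasis hb hc hsB hs0 ha'
    obtain ⟨q, hqirr, hqe⟩ := WfDvdMonoid.exists_irreducible_factor heu he0
    have hq : Prime q := (UniqueFactorizationMonoid.irreducible_iff_prime).mp hqirr
    have hqs : q ∣ e ^ (p - 1) := hqe.trans (dvd_pow_self e (by omega))
    have hqb : q ∣ b := hq.dvd_of_dvd_pow (hqs.trans hdb)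
    have hqc : q ∣ c := hq.dvd_of_dvd_pow (hqs.trans hdc)
    exact hq.not_unit (hrel hqb hqc)
end

section
/- Let A be a UFD of characteristic p > 0 and B a subring of A containing A^p. If elements f_1, f_2 ∈ A form a p-basis of C_B(f_1,f_2) over B, then for every b_1,b_2,c_1,c_2 ∈ B with b_1 ≠ 0, b_2 ≠ 0, gcd(b_1,c_1) a unit and gcd(b_2,c_2) a unit, the elements b_1·f_1 + c_1 and b_2·f_2 + c_2 have unit gcd (every common divisor of them is invertible). -/
def wcoef {A : Type*} [CommRing A] (n : ℕ) (b c : A) (i : ℕ) : A :=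
  (n.choose i : A) * b ^ i * c ^ (n - i)

lemma wcoef_mem {A : Type*} [CommRing A] (B : Subring A) (n : ℕ) {b c : A}
    (hb : b ∈ B) (hc : c ∈ B) (i : ℕ) : wcoef n b c i ∈ B :=
  mul_mem (mul_mem (natCast_mem B _) (pow_mem hb _)) (pow_mem hc _)

lemma wcoef_last {A : Type*} [CommRing A] (n : ℕ) (b c : A) : wcoef n b c n = b ^ n := by
  simp [wcoef, Nat.choose_self, Nat.sub_self]

lemma wcoef_zero {A : Type*} [CommRing A] (n : ℕ) (b c : A) : wcoef n b c 0 = c ^ n := by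
  simp [wcoef]

lemma wcoef_expand {A : Type*} [CommRing A] (n : ℕ) (b c f : A) :
    (b * f + c) ^ n = ∑ i ∈ Finset.range (n + 1), wcoef n b c i * f ^ i := by
  rw [add_pow]
  refine Finset.sum_congr rfl fun i _ => ?_
  simp [wcoef, mul_pow]; ring



/-- **Lemma 6 b).** If `f₁, f₂ ∈ A` form a `p`-basis of `C_B(f₁,f₂)` over `B`, then for all
`b₁, b₂, c₁, c₂ ∈ B` with `bᵢ ≠ 0` and `gcd(bᵢ,cᵢ) ∼ 1` (`i = 1,2`), the elements
`b₁·f₁ + c₁` and `b₂·f₂ + c₂` have unit gcd. -/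
theorem isRelPrime_of_pBasis_two
    {A : Type*} [CommRing A] [IsDomain A] [UniqueFactorizationMonoid A]
    (p : ℕ) (hp : 0 < p) [CharP A p]
    (B : Subring A) (hB : ∀ a : A, a ^ p ∈ B) (f₁ f₂ : A)
    (hbasis : IsPBasis B (CB B ![f₁, f₂]) p ![f₁, f₂]) :
    ∀ b₁ b₂ c₁ c₂ : A, b₁ ∈ B → b₂ ∈ B → c₁ ∈ B → c₂ ∈ B →
      b₁ ≠ 0 → b₂ ≠ 0 → IsRelPrime b₁ c₁ → IsRelPrime b₂ c₂ →
      IsRelPrime (b₁ * f₁ + c₁) (b₂ * f₂ + c₂) := by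
  obtain ⟨hBsub, hmon, hind, hspan⟩ := hbasis
  have hp1 : p ≠ 1 := CharP.char_ne_one A p
  have hp2 : 2 ≤ p := by omega
  intro b₁ b₂ c₁ c₂ hb₁ hb₂ hc₁ hc₂ hb₁0 hb₂0 hrp₁ hrp₂ d hd₁ hd₂
  by_contra hdu
  set n := p - 1 with hn
  have hpn : p = n + 1 := by omega
  have hn0 : n ≠ 0 := by omega
  set g₁ := b₁ * f₁ + c₁ with hg₁
  set g₂ := b₂ * f₂ + c₂ with hg₂
  -- the two distinguished indices
  have hnp : n < p := by omega
  have h0p : 0 < p := hp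
  set iL : Fin p := ⟨n, hnp⟩ with hiL
  set i0 : Fin p := ⟨0, h0p⟩ with hi0
  -- expansion
  have hM : ∀ α : Fin 2 → Fin p, pMonomial ![f₁, f₂] α = f₁ ^ (α 0 : ℕ) * f₂ ^ (α 1 : ℕ) := by
    intro α
    simp [pMonomial, Fin.prod_univ_two]
  have hexp : ∀ b c f : A, (b * f + c) ^ n = ∑ i : Fin p, wcoef n b c i * f ^ (i : ℕ) := by
    intro b c f
    rw [wcoef_expand, ← hpn, ← Fin.sum_univ_eq_sum_range (fun i => wcoef n b c i * f ^ i) p]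
  have E : (g₁ * g₂) ^ n
      = ∑ α : Fin 2 → Fin p, (wcoef n b₁ c₁ (α 0) * wcoef n b₂ c₂ (α 1)) * pMonomial ![f₁, f₂] α := by
    rw [mul_pow, hexp b₁ c₁ f₁, hexp b₂ c₂ f₂, Finset.sum_mul_sum]
    have hre : ∑ α : Fin 2 → Fin p,
        (wcoef n b₁ c₁ (α 0) * wcoef n b₂ c₂ (α 1)) * pMonomial ![f₁, f₂] α
        = ∑ x : Fin p × Fin p,
          wcoef n b₁ c₁ x.1 * f₁ ^ (x.1 : ℕ) * (wcoef n b₂ c₂ x.2 * f₂ ^ (x.2 : ℕ)) := by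
      refine Fintype.sum_equiv (finTwoArrowEquiv (Fin p)) _ _ fun α => ?_
      simp [finTwoArrowEquiv, hM]
      ring
    rw [hre, Fintype.sum_prod_type]
  have hwmem : ∀ α : Fin 2 → Fin p, wcoef n b₁ c₁ (α 0) * wcoef n b₂ c₂ (α 1) ∈ B := fun α =>
    mul_mem (wcoef_mem B n hb₁ hc₁ _) (wcoef_mem B n hb₂ hc₂ _)
  rcases eq_or_ne d 0 with rfl | hd0
  · -- d = 0 : then g₁ = 0 and the expansion of 0 gives b₁^n b₂^n = 0
    have hg10 : g₁ = 0 := zero_dvd_iff.mp hd₁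
    have h0 : ∑ α : Fin 2 → Fin p, (wcoef n b₁ c₁ (α 0) * wcoef n b₂ c₂ (α 1)) * pMonomial ![f₁, f₂] α = 0 := by
      rw [← E, hg10, zero_mul, zero_pow hn0]
    have h2 := hind _ hwmem h0 ![iL, iL]
    simp only [Matrix.cons_val_zero, Matrix.cons_val_one, Matrix.head_cons] at h2
    rw [wcoef_last, wcoef_last] at h2
    rcases mul_eq_zero.mp h2 with h | h
    · exact hb₁0 (pow_eq_zero_iff hn0 |>.mp h)
    · exact hb₂0 (pow_eq_zero_iff hn0 |>.mp h)
  · -- d ≠ 0 : take a prime factor q of d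
    obtain ⟨q, hqirr, hqd⟩ := WfDvdMonoid.exists_irreducible_factor hdu hd0
    have hq : Prime q := UniqueFactorizationMonoid.irreducible_iff_prime.mp hqirr
    have hq₁ : q ∣ g₁ := hqd.trans hd₁
    have hq₂ : q ∣ g₂ := hqd.trans hd₂
    -- q^p divides (g₁ g₂)^n
    have hq2n : q ^ (2 * n) ∣ (g₁ * g₂) ^ n := by
      have : q * q ∣ g₁ * g₂ := mul_dvd_mul hq₁ hq₂
      calc q ^ (2 * n) = (q * q) ^ n := by rw [pow_mul, sq]
        _ ∣ (g₁ * g₂) ^ n := pow_dvd_pow_of_dvd this n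
    have hqp : q ^ p ∣ (g₁ * g₂) ^ n := (pow_dvd_pow q (by omega)).trans hq2n
    obtain ⟨a', ha'⟩ := hqp
    -- a' ∈ CB
    have hclB : ∀ x ∈ B, x ∈ Subring.closure ((B : Set A) ∪ Set.range ![f₁, f₂]) :=
      fun x hx => Subring.subset_closure (Or.inl hx)
    have hclf₁ : f₁ ∈ Subring.closure ((B : Set A) ∪ Set.range ![f₁, f₂]) :=
      Subring.subset_closure (Or.inr ⟨0, rfl⟩)
    have hclf₂ : f₂ ∈ Subring.closure ((B : Set A) ∪ Set.range ![f₁, f₂]) :=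
      Subring.subset_closure (Or.inr ⟨1, rfl⟩)
    have ha'CB : a' ∈ CB B ![f₁, f₂] := by
      refine ⟨q ^ p, (g₁ * g₂) ^ n, hclB _ (hB q), ?_, pow_ne_zero _ hq.ne_zero, ?_⟩
      · exact pow_mem (mul_mem (add_mem (mul_mem (hclB _ hb₁) hclf₁) (hclB _ hc₁))
          (add_mem (mul_mem (hclB _ hb₂) hclf₂) (hclB _ hc₂))) n
      · rw [mul_comm]; exact ha'.symm
    obtain ⟨bc, hbcB, hbc⟩ := hspan a' ha'CB
    -- compare coefficients
    have hsum : ∑ α : Fin 2 → Fin p,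
        (q ^ p * bc α - wcoef n b₁ c₁ (α 0) * wcoef n b₂ c₂ (α 1)) * pMonomial ![f₁, f₂] α = 0 := by
      have h1 : ∑ α : Fin 2 → Fin p, (q ^ p * bc α) * pMonomial ![f₁, f₂] α = (g₁ * g₂) ^ n := by
        rw [ha', hbc, Finset.mul_sum]
        exact Finset.sum_congr rfl fun α _ => by ring
      simp only [sub_mul, Finset.sum_sub_distrib, h1, ← E, sub_self]
    have hcoef := hind _ (fun α => sub_mem (mul_mem (hB q) (hbcB α)) (hwmem α)) hsum
    have hdvd : ∀ α : Fin 2 → Fin p, q ∣ wcoef n b₁ c₁ (α 0) * wcoef n b₂ c₂ (α 1) := by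
      intro α
      have := sub_eq_zero.mp (hcoef α)
      exact (dvd_pow_self q hp.ne').trans ⟨bc α, this.symm⟩
    -- corner coefficients
    have hLL := hdvd ![iL, iL]
    have hL0 := hdvd ![iL, i0]
    have h0L := hdvd ![i0, iL]
    have h00 := hdvd ![i0, i0]
    simp only [Matrix.cons_val_zero, Matrix.cons_val_one, Matrix.head_cons] at hLL hL0 h0L h00
    rw [wcoef_last, wcoef_last] at hLL
    rw [wcoef_last, wcoef_zero] at hL0
    rw [wcoef_zero, wcoef_last] at h0L
    rw [wcoef_zero, wcoef_zero] at h00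
    have split : ∀ x y : A, q ∣ x ^ n * y ^ n → q ∣ x ∨ q ∣ y := by
      intro x y h
      rcases hq.dvd_mul.mp h with h | h
      · exact Or.inl (hq.dvd_of_dvd_pow h)
      · exact Or.inr (hq.dvd_of_dvd_pow h)
    have notu : ¬IsUnit q := hq.not_unit
    rcases split _ _ hLL with hqb₁ | hqb₂
    · rcases split _ _ h00 with hqc₁ | hqc₂
      · exact notu (hrp₁ hqb₁ hqc₁)
      · rcases split _ _ h0L with hqc₁ | hqb₂
        · exact notu (hrp₁ hqb₁ hqc₁)
        · exact notu (hrp₂ hqb₂ hqc₂)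
    · rcases split _ _ h00 with hqc₁ | hqc₂
      · rcases split _ _ hL0 with hqb₁ | hqc₂
        · exact notu (hrp₁ hqb₁ hqc₁)
        · exact notu (hrp₂ hqb₂ hqc₂)
      · exact notu (hrp₂ hqb₂ hqc₂)
end

section
/- Let A be a UFD of characteristic p > 0 and B a subring of A containing A^p. Assume elements f_1,…,f_m ∈ A form a p-basis of C_B(f_1,…,f_m) over B, and set R_i = B[f_1,…,f_{i-1},f_{i+1},…,f_m]. Then for every i ∈ {1,…,m} and all b,c ∈ R_i with b ≠ 0 and gcd(b,c) a unit, the element b·f_i + c is square-free and B-free. -/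
open MvPolynomial

section Reduction

variable {R : Type*} [CommRing R] {m p : ℕ}

noncomputable def pMonomialX (α : Fin m → Fin p) : MvPolynomial (Fin m) R :=
  ∏ j, X j ^ (α j : ℕ)

noncomputable def pReduced (co : (Fin m → Fin p) → R) : MvPolynomial (Fin m) R :=
  ∑ α, C (co α) * pMonomialX α

lemma pReduced_add (co₁ co₂ : (Fin m → Fin p) → R) :
    pReduced (co₁ + co₂) = pReduced co₁ + pReduced co₂ := by
  simp [pReduced, add_mul, Finset.sum_add_distrib]

lemma pReduced_single (α : Fin m → Fin p) (c : R) :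
    pReduced (Pi.single α c) = C c * pMonomialX α := by
  simp [pReduced, Pi.single_apply, apply_ite C, ite_mul]

lemma monomial_eq_C_mul_pow_mul_pMonomialX [NeZero p] (u : Fin m →₀ ℕ) (a : R) :
    monomial u a = C a * (∏ j, X j ^ (u j / p)) ^ p *
      pMonomialX (fun j => (⟨u j % p, Nat.mod_lt _ (NeZero.pos p)⟩ : Fin p)) := by
  rw [monomial_eq, Finsupp.prod_fintype _ _ (fun _ => pow_zero _), pMonomialX, mul_assoc,
    ← Finset.prod_pow, ← Finset.prod_mul_distrib]
  congr 1
  refine Finset.prod_congr rfl fun j _ => ?_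
  rw [← pow_mul, ← pow_add, Nat.div_add_mod']

end Reduction

section PartialDerivative

variable {A : Type*} [CommRing A] {B : Subring A} {m p : ℕ} {f : Fin m → A}

lemma aeval_pMonomialX (α : Fin m → Fin p) : aeval f (pMonomialX (R := B) α) = pMonomial f α := by
  simp [pMonomialX, pMonomial]

lemma aeval_pReduced (co : (Fin m → Fin p) → B) :
    aeval f (pReduced co) = ∑ α, (co α : A) * pMonomial f α := by
  simp [pReduced, aeval_pMonomialX, Algebra.algebraMap_ofSubsemiring_apply]

variable [NeZero p] [CharP A p]

lemma exists_pReduced (hB : ∀ a : A, a ^ p ∈ B) (i : Fin m)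
    (P : MvPolynomial (Fin m) B) :
    ∃ co : (Fin m → Fin p) → B, aeval f P = aeval f (pReduced co) ∧
      aeval f (pderiv i P) = aeval f (pderiv i (pReduced co)) := by
  induction P using MvPolynomial.induction_on' with
  | monomial u a =>
    -- `X^u = (X^(u / p))^p * X^(u % p)`, and the `p`-th power is a constant from `B` for both
    -- evaluation and `pderiv`.
    rw [monomial_eq_C_mul_pow_mul_pMonomialX (p := p)]
    refine ⟨Pi.single (fun j => ⟨u j % p, Nat.mod_lt _ (NeZero.pos p)⟩)
      (a * ⟨(∏ j, f j ^ (u j / p)) ^ p, hB _⟩), ?_, ?_⟩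
    · simp [pReduced_single, Algebra.algebraMap_ofSubsemiring_apply]
    · simp [pReduced_single, Algebra.algebraMap_ofSubsemiring_apply]
  | add P Q hP hQ =>
    obtain ⟨co₁, h₁, h₁'⟩ := hP
    obtain ⟨co₂, h₂, h₂'⟩ := hQ
    exact ⟨co₁ + co₂, by simp [pReduced_add, h₁, h₂], by simp [pReduced_add, h₁', h₂']⟩

lemma aeval_pderiv_eq_of_aeval_eq (hB : ∀ a : A, a ^ p ∈ B) (hind : pIndependent B p f)
    (i : Fin m) {P Q : MvPolynomial (Fin m) B} (h : aeval f P = aeval f Q) :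
    aeval f (pderiv i P) = aeval f (pderiv i Q) := by
  obtain ⟨co, hco, hco'⟩ := exists_pReduced (f := f) hB i (P - Q)
  have hco0 : co = 0 := funext fun α => Subtype.ext <|
    hind (fun α => co α) (fun α => (co α).2)
      (by rw [← aeval_pReduced, ← hco, map_sub, h, sub_self]) α
  rw [← sub_eq_zero, ← map_sub, ← map_sub, hco', hco0]
  simp [pReduced]

variable (B f) in
open Classical in
/-- The partial derivative `∂/∂fᵢ` on `B[f]`, computed on any polynomial representative; the
choice does not matter by `aeval_pderiv_eq_of_aeval_eq`. Off `B[f]` it is junk `0`. -/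
noncomputable def pDeriv (i : Fin m) (x : A) : A :=
  if h : ∃ P : MvPolynomial (Fin m) B, aeval f P = x then aeval f (pderiv i h.choose) else 0

lemma pDeriv_aeval (hB : ∀ a : A, a ^ p ∈ B) (hind : pIndependent B p f) (i : Fin m)
    (P : MvPolynomial (Fin m) B) : pDeriv B f i (aeval f P) = aeval f (pderiv i P) := by
  have h : ∃ Q : MvPolynomial (Fin m) B, aeval f Q = aeval f P := ⟨P, rfl⟩
  rw [pDeriv, dif_pos h]
  exact aeval_pderiv_eq_of_aeval_eq hB hind i h.choose_spec

end PartialDerivative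

lemma Nat.exists_not_dvd_succ_and_mul_eq_mul_add {p V : ℕ} (hp : p.Prime) (hV : 2 ≤ V) :
    ∃ n s t r : ℕ, ¬p ∣ n + 1 ∧ 0 < t ∧ p * s = n * V + t ∧ t + r = V := by
  by_cases hpV : p ∣ V
  · obtain ⟨k, rfl⟩ := hpV
    exact ⟨0, k, p * k, 0, by simpa using hp.not_dvd_one, by omega, by ring, rfl⟩
  · obtain ⟨u, -, hu⟩ := Nat.exists_mul_mod_eq_one_of_coprime
      (Nat.coprime_comm.1 ((hp.coprime_iff_not_dvd).2 hpV)) hp.one_lt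
    have hu0 : u ≠ 0 := by rintro rfl; simp at hu
    have hpu : ¬p ∣ u := fun h => by simp [Nat.mul_mod, Nat.mod_eq_zero_of_dvd h] at hu
    obtain ⟨n, rfl⟩ := Nat.exists_eq_add_one_of_ne_zero hu0
    have hdiv := Nat.div_add_mod (V * (n + 1)) p
    rw [hu] at hdiv
    have hVn : V * (n + 1) = n * V + V := by ring
    exact ⟨n, V * (n + 1) / p, V - 1, 1, hpu, by omega, by omega, by omega⟩

lemma Subring.closure_union_eq_adjoin {A : Type*} [CommRing A] (B : Subring A) (s : Set A) :
    Subring.closure ((B : Set A) ∪ s) = (Algebra.adjoin B s).toSubring := by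
  rw [Algebra.adjoin_eq_ring_closure, Algebra.coe_algebraMap_ofSubsemiring, Subtype.range_coe]

section Adjoin

variable {A : Type*} [CommRing A] {B : Subring A} {m p : ℕ} {f : Fin m → A}

lemma exists_mem_supported_aeval_eq {s : Set (Fin m)} {x : A}
    (hx : x ∈ Algebra.adjoin B (f '' s)) :
    ∃ P : MvPolynomial (Fin m) B, P ∈ supported B s ∧ aeval f P = x := by
  have hs : f '' s = aeval (R := B) f '' (X '' s) := by rw [Set.image_image]; simp
  rwa [hs, ← AlgHom.map_adjoin, ← supported_eq_adjoin_X] at hx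

lemma exists_aeval_eq_of_mem_adjoin {x : A} (hx : x ∈ Algebra.adjoin B (Set.range f)) :
    ∃ P : MvPolynomial (Fin m) B, aeval f P = x := by
  rwa [Algebra.adjoin_range_eq_range_aeval] at hx

lemma IsPBasis.mem_adjoin_of_mul_mem (h : IsPBasis B (CB B f) p f) {s w : A}
    (hs : s ∈ Algebra.adjoin B (Set.range f)) (hs0 : s ≠ 0)
    (hws : w * s ∈ Algebra.adjoin B (Set.range f)) : w ∈ Algebra.adjoin B (Set.range f) := by
  have hclosure := Subring.closure_union_eq_adjoin B (Set.range f)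
  obtain ⟨co, hco, rfl⟩ := h.2.2.2 w ⟨s, w * s, by rwa [hclosure], by rwa [hclosure], hs0, rfl⟩
  refine Subalgebra.sum_mem _ fun α _ => mul_mem ?_ ?_
  · exact Subalgebra.algebraMap_mem (Algebra.adjoin B (Set.range f)) ⟨co α, hco α⟩
  · exact Subalgebra.prod_mem _ fun j _ => pow_mem (Algebra.subset_adjoin (Set.mem_range_self j)) _

variable [NeZero p] [CharP A p]

lemma pDeriv_zero (hB : ∀ a : A, a ^ p ∈ B) (hind : pIndependent B p f) (i : Fin m) :
    pDeriv B f i 0 = 0 := by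
  simpa using pDeriv_aeval hB hind i 0

lemma pDeriv_algebraMap_mul (hB : ∀ a : A, a ^ p ∈ B) (hind : pIndependent B p f) (i : Fin m)
    (c : B) {x : A} (hx : x ∈ Algebra.adjoin B (Set.range f)) :
    pDeriv B f i (c * x) = c * pDeriv B f i x := by
  obtain ⟨P, rfl⟩ := exists_aeval_eq_of_mem_adjoin hx
  have h : (c : A) * aeval f P = aeval f (C c * P) := by
    simp [Algebra.algebraMap_ofSubsemiring_apply]
  rw [h, pDeriv_aeval hB hind, pDeriv_aeval hB hind, pderiv_C_mul]
  simp [Algebra.algebraMap_ofSubsemiring_apply]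

lemma pDeriv_pow (hB : ∀ a : A, a ^ p ∈ B) (hind : pIndependent B p f) (i : Fin m)
    {x : A} (hx : x ∈ Algebra.adjoin B (Set.range f)) (n : ℕ) :
    pDeriv B f i (x ^ n) = n * x ^ (n - 1) * pDeriv B f i x := by
  obtain ⟨P, rfl⟩ := exists_aeval_eq_of_mem_adjoin hx
  rw [← map_pow, pDeriv_aeval hB hind, pDeriv_aeval hB hind, pderiv_pow]
  simp

lemma pDeriv_mul_self_add (hB : ∀ a : A, a ^ p ∈ B) (hind : pIndependent B p f) (i : Fin m)
    {b c : A} (hb : b ∈ Algebra.adjoin B (f '' {j | j ≠ i}))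
    (hc : c ∈ Algebra.adjoin B (f '' {j | j ≠ i})) : pDeriv B f i (b * f i + c) = b := by
  have hzero : ∀ P ∈ supported B {j | j ≠ i}, pderiv i P = 0 := fun P hP =>
    pderiv_eq_zero_of_notMem_vars fun hi => mem_supported.1 hP hi rfl
  obtain ⟨Pb, hPb, rfl⟩ := exists_mem_supported_aeval_eq hb
  obtain ⟨Pc, hPc, rfl⟩ := exists_mem_supported_aeval_eq hc
  have h : aeval f Pb * f i + aeval f Pc = aeval f (Pb * X i + Pc) := by simp
  rw [h, pDeriv_aeval hB hind]
  simp [hzero Pb hPb, hzero Pc hPc]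

end Adjoin

section Divisibility

variable {A : Type*} [CommRing A] {B : Subring A} {m p : ℕ} {f : Fin m → A}

lemma mem_adjoin_of_mem {s : Set A} {x : A} (hx : x ∈ B) : x ∈ Algebra.adjoin B s :=
  Subalgebra.algebraMap_mem _ (⟨x, hx⟩ : B)

variable [NeZero p] [CharP A p]

lemma dvd_pDeriv_of_dvd (hB : ∀ a : A, a ^ p ∈ B) (hbasis : IsPBasis B (CB B f) p f) (i : Fin m)
    {β g : A} (hβ : β ∈ B) (hg : g ∈ Algebra.adjoin B (Set.range f)) (hβg : β ∣ g) :
    β ∣ pDeriv B f i g := by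
  have hind := hbasis.2.2.1
  obtain ⟨w, rfl⟩ := hβg
  rcases eq_or_ne β 0 with rfl | hβ0
  · simp [pDeriv_zero hB hind i]
  have hw := hbasis.mem_adjoin_of_mul_mem (mem_adjoin_of_mem hβ) hβ0 (by rwa [mul_comm])
  exact ⟨pDeriv B f i w, pDeriv_algebraMap_mul hB hind i ⟨β, hβ⟩ hw⟩

lemma prime_dvd_pDeriv_of_mul_self_dvd [IsDomain A] [WfDvdMonoid A] (hB : ∀ a : A, a ^ p ∈ B)
    (hbasis : IsPBasis B (CB B f) p f) (i : Fin m) {q g : A} (hq : Prime q) (hg0 : g ≠ 0)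
    (hg : g ∈ Algebra.adjoin B (Set.range f)) (hqg : q * q ∣ g) : q ∣ pDeriv B f i g := by
  have hp : p.Prime := (CharP.char_is_prime_of_pos A p).out
  have hind := hbasis.2.2.1
  obtain ⟨V, h, hqh, rfl⟩ := WfDvdMonoid.max_power_factor hg0 hq.irreducible
  have hV : 2 ≤ V := by
    by_contra! hV
    refine hqh ((mul_dvd_mul_iff_left (pow_ne_zero V hq.ne_zero)).1 ?_)
    rw [← pow_succ]
    exact (pow_dvd_pow q (show V + 1 ≤ 2 by omega)).trans (by rwa [sq])
  -- `g^(n+1) = q^(ps) * w` with `q^(ps) ∈ B`, `p ∤ n + 1` and `ps = nV + t > nV`.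
  obtain ⟨n, s, t, r, hpn, ht, hst, htr⟩ := Nat.exists_not_dvd_succ_and_mul_eq_mul_add hp hV
  set c : B := ⟨(q ^ s) ^ p, hB _⟩
  set w := q ^ r * h ^ (n + 1)
  have hpow : (q ^ V * h) ^ (n + 1) = c * w := by
    have hexp : V * (n + 1) = s * p + r := by rw [mul_comm s p, hst, ← htr]; ring
    simp only [c, w, mul_pow, ← pow_mul, ← mul_assoc, ← pow_add, hexp]
  have hw : w ∈ Algebra.adjoin B (Set.range f) :=
    hbasis.mem_adjoin_of_mul_mem (mem_adjoin_of_mem c.2) (by simp [c, hq.ne_zero, hp.ne_zero])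
      (by rw [mul_comm, ← hpow]; exact pow_mem hg _)
  have hderiv := pDeriv_pow hB hind i hg (n + 1)
  rw [hpow, pDeriv_algebraMap_mul hB hind i c hw] at hderiv
  have hcancel : ((n + 1 : ℕ) : A) * h ^ n * pDeriv B f i (q ^ V * h) =
      q ^ t * pDeriv B f i w := by
    refine mul_left_cancel₀ (pow_ne_zero (n * V) hq.ne_zero) ?_
    calc q ^ (n * V) * (((n + 1 : ℕ) : A) * h ^ n * pDeriv B f i (q ^ V * h))
        = ((n + 1 : ℕ) : A) * (q ^ V * h) ^ (n + 1 - 1) * pDeriv B f i (q ^ V * h) := by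
          rw [Nat.add_sub_cancel, mul_pow, ← pow_mul, mul_comm V n]; ring
      _ = c * pDeriv B f i w := hderiv.symm
      _ = q ^ (n * V) * (q ^ t * pDeriv B f i w) := by
          rw [← mul_assoc, ← pow_add, ← hst, mul_comm p s, pow_mul]
  have hdvd : q ∣ ((n + 1 : ℕ) : A) * h ^ n * pDeriv B f i (q ^ V * h) :=
    hcancel ▸ dvd_mul_of_dvd_left (dvd_pow_self q ht.ne') _
  rcases hq.dvd_or_dvd hdvd with hd | hd
  · rcases hq.dvd_or_dvd hd with hd | hd
    · exact absurd (isUnit_of_dvd_unit hd ((CharP.isUnit_natCast_iff hp).2 hpn)) hq.not_isUnit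
    · exact absurd (hq.dvd_of_dvd_pow hd) hqh
  · exact hd

end Divisibility

/-- **Proposition 3 (i).** If `f₁,…,f_m` form a `p`-basis of `C_B(f₁,…,f_m)` over `B`, then
for every `i` and all `b, c ∈ Rᵢ = B[f₁,…,f̂ᵢ,…,f_m]` with `b ≠ 0` and `gcd(b,c) ∼ 1`, the
element `b·fᵢ + c` is square-free and `B`-free. -/
theorem squarefree_and_BFree_of_pBasis
    {A : Type*} [CommRing A] [IsDomain A] [UniqueFactorizationMonoid A]
    (p : ℕ) (hp : 0 < p) [CharP A p]
    (B : Subring A) (hB : ∀ a : A, a ^ p ∈ B) {m : ℕ} (f : Fin m → A)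
    (hbasis : IsPBasis B (CB B f) p f) :
    ∀ i : Fin m, ∀ b c : A,
      b ∈ Subring.closure ((B : Set A) ∪ (f '' {j | j ≠ i})) →
      c ∈ Subring.closure ((B : Set A) ∪ (f '' {j | j ≠ i})) →
      b ≠ 0 → IsRelPrime b c →
      Squarefree (b * f i + c) ∧ BFree B (b * f i + c) := by
  intro i b c hb hc hb0 hbc
  have : NeZero p := ⟨hp.ne'⟩
  have hind := hbasis.2.2.1
  rw [Subring.closure_union_eq_adjoin, Subalgebra.mem_toSubring] at hb hc
  have hRi : Algebra.adjoin B (f '' {j | j ≠ i}) ≤ Algebra.adjoin B (Set.range f) :=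
    Algebra.adjoin_mono (Set.image_subset_range _ _)
  have hg : b * f i + c ∈ Algebra.adjoin B (Set.range f) :=
    add_mem (mul_mem (hRi hb) (Algebra.subset_adjoin (Set.mem_range_self i))) (hRi hc)
  have hderiv : pDeriv B f i (b * f i + c) = b := pDeriv_mul_self_add hB hind i hb hc
  have hg0 : b * f i + c ≠ 0 := fun h => hb0 (by rw [← hderiv, h, pDeriv_zero hB hind i])
  have hunit : ∀ d, d ∣ b * f i + c → d ∣ b → IsUnit d := fun d hdg hdb =>
    hbc hdb (by simpa using dvd_sub hdg (hdb.mul_right (f i)))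
  refine ⟨(squarefree_iff_irreducible_sq_not_dvd_of_ne_zero hg0).2 fun q hq hqg => ?_,
    fun β hβ hβg => hunit β hβg (hderiv ▸ dvd_pDeriv_of_dvd hB hbasis i hβ hg hβg)⟩
  have hqb := hderiv ▸ prime_dvd_pDeriv_of_mul_self_dvd hB hbasis i
    (UniqueFactorizationMonoid.irreducible_iff_prime.1 hq) hg0 hg hqg
  exact hq.not_isUnit (hunit q ((dvd_mul_right q q).trans hqg) hqb)
end

section
/- Let A be a UFD of characteristic p > 0 and B a subring of A containing A^p, and let m > 1. Assume elements f_1,…,f_m ∈ A form a p-basis of C_B(f_1,…,f_m) over B, and for i ≠ j set R_{ij} = B[f_1,…,f_m with f_i and f_j omitted]. Then for every i ≠ j in {1,…,m} and all b_1,b_2,c_1,c_2 ∈ R_{ij} with b_1,b_2 ≠ 0, gcd(b_1,c_1) a unit and gcd(b_2,c_2) a unit, the elements b_1·f_i + c_1 and b_2·f_j + c_2 have unit gcd (every common divisor of them is invertible). -/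
theorem Prime.dvd_of_isRelPrime_of_dvd_mul {M : Type*} [CommMonoidWithZero M] {q b c y : M}
    (hq : Prime q) (hbc : IsRelPrime b c) (hb : q ∣ b * y) (hc : q ∣ c * y) : q ∣ y := by
  by_contra hy
  exact hq.not_isUnit
    (hbc ((hq.dvd_or_dvd hb).resolve_right hy) ((hq.dvd_or_dvd hc).resolve_right hy))

theorem exists_mem_CB_of_dvd {A : Type*} [CommRing A] {B : Subring A} {m : ℕ} {f : Fin m → A}
    {c x : A} (hc : c ∈ B) (hc0 : c ≠ 0) (hx : x ∈ Subring.closure (↑B ∪ Set.range f))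
    (hcx : c ∣ x) : ∃ g ∈ CB B f, x = c * g := by
  obtain ⟨g, rfl⟩ := hcx
  exact ⟨g, ⟨c, c * g, Subring.subset_closure (Or.inl hc), hx, hc0, mul_comm g c⟩, rfl⟩

theorem mul_add_mem_closure {A : Type*} [CommRing A] {B : Subring A} {m : ℕ} {f : Fin m → A}
    {S : Set (Fin m)} {b c : A} (hb : b ∈ Subring.closure (↑B ∪ f '' S))
    (hc : c ∈ Subring.closure (↑B ∪ f '' S)) (k : Fin m) :
    b * f k + c ∈ Subring.closure (↑B ∪ Set.range f) := by
  have hS : Subring.closure (↑B ∪ f '' S) ≤ Subring.closure (↑B ∪ Set.range f) :=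
    Subring.closure_mono (Set.union_subset_union_right _ (Set.image_subset_range _ _))
  exact add_mem (mul_mem (hS hb) (Subring.subset_closure (Or.inr ⟨k, rfl⟩))) (hS hc)

open Finset Polynomial

theorem aeval_mul_aeval_eq_sum {R A : Type*} [CommRing R] [CommRing A] [Algebra R A]
    {p : ℕ} {P Q : R[X]}
    (hP : P.natDegree < p) (hQ : Q.natDegree < p) (x y : A) :
    aeval x P * aeval y Q = ∑ s : Fin p, ∑ t : Fin p,
      algebraMap R A (P.coeff s * Q.coeff t) * x ^ (s : ℕ) * y ^ (t : ℕ) := by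
  rw [aeval_eq_sum_range' hP, aeval_eq_sum_range' hQ, sum_mul_sum, ← Fin.sum_univ_eq_sum_range]
  refine sum_congr rfl fun s _ => ?_
  rw [← Fin.sum_univ_eq_sum_range]
  refine sum_congr rfl fun t _ => ?_
  simp only [Algebra.smul_def, map_mul]
  ring

section

variable {A : Type*} [CommRing A] {m p : ℕ} [NeZero p] {i j : Fin m}

abbrev VanishingExponents (p : ℕ) [NeZero p] (i j : Fin m) :=
  {α : Fin m → Fin p // α i = 0 ∧ α j = 0}

def exponentSplit (hij : i ≠ j) :
    (Fin m → Fin p) ≃ VanishingExponents p i j × Fin p × Fin p where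
  toFun β := (⟨Function.update (Function.update β i 0) j 0, by simp [hij]⟩, β i, β j)
  invFun x := Function.update (Function.update x.1.1 i x.2.1) j x.2.2
  left_inv β := by
    ext l
    simp only [Function.update_apply]
    split_ifs <;> simp_all
  right_inv := by
    rintro ⟨⟨α, hαi, hαj⟩, s, t⟩
    ext l
    · simp only [Function.update_apply]
      split_ifs <;> simp_all
    · simp [hij]
    · simp

theorem pMonomial_exponentSplit_symm (f : Fin m → A) (hij : i ≠ j)
    (α : VanishingExponents p i j) (s t : Fin p) :
    pMonomial f ((exponentSplit hij).symm (α, s, t)) =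
      pMonomial f α.1 * f i ^ (s : ℕ) * f j ^ (t : ℕ) := by
  obtain ⟨α, hαi, hαj⟩ := α
  have hfactor : ∀ l, f l ^ (((exponentSplit hij).symm (⟨α, hαi, hαj⟩, s, t) l : Fin p) : ℕ) =
      f l ^ (α l : ℕ) * (if l = i then f i ^ (s : ℕ) else 1) *
        (if l = j then f j ^ (t : ℕ) else 1) := by
    intro l
    simp only [exponentSplit, Equiv.coe_fn_symm_mk, Function.update_apply]
    split_ifs <;> simp_all
  simp only [pMonomial, hfactor, prod_mul_distrib, Fintype.prod_ite_eq']

theorem sum_mul_pMonomial_eq (f : Fin m → A) (hij : i ≠ j) (F : (Fin m → Fin p) → A) :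
    ∑ β, F β * pMonomial f β = ∑ s : Fin p, ∑ t : Fin p,
      (∑ α : VanishingExponents p i j, F ((exponentSplit hij).symm (α, s, t)) * pMonomial f α.1) *
        f i ^ (s : ℕ) * f j ^ (t : ℕ) := by
  rw [← (exponentSplit hij).symm.sum_comp]
  simp only [Fintype.sum_prod_type, pMonomial_exponentSplit_symm, sum_mul]
  rw [sum_comm]
  refine sum_congr rfl fun s _ => ?_
  rw [sum_comm]
  simp only [mul_assoc]

abbrev pMonomialSpanWithout (B : Subring A) (p : ℕ) [NeZero p] (f : Fin m → A) (i j : Fin m) :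
    Submodule B A :=
  Submodule.span B (Set.range fun α : VanishingExponents p i j => pMonomial f α.1)

theorem pIndependent.eq_zero_of_sum_eq_zero {B : Subring A} {f : Fin m → A}
    (hind : pIndependent B p f) (hij : i ≠ j) {r : Fin p → Fin p → A}
    (hr : ∀ s t, r s t ∈ pMonomialSpanWithout B p f i j)
    (h0 : ∑ s : Fin p, ∑ t : Fin p, r s t * f i ^ (s : ℕ) * f j ^ (t : ℕ) = 0) (s t : Fin p) :
    r s t = 0 := by
  choose d hd using fun s t => (Submodule.mem_span_range_iff_exists_fun B).1 (hr s t)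
  have hd0 := hind (fun β => d (exponentSplit hij β).2.1 (exponentSplit hij β).2.2
    (exponentSplit hij β).1) (fun β => Subtype.prop _) <| by
    rw [sum_mul_pMonomial_eq f hij, ← h0]
    simp only [Equiv.apply_symm_apply, ← hd, Subring.smul_def, smul_eq_mul]
  rw [← hd]
  refine sum_eq_zero fun α _ => ?_
  have := hd0 ((exponentSplit hij).symm (α, s, t))
  simp only [Equiv.apply_symm_apply, ZeroMemClass.coe_eq_zero] at this
  rw [this, zero_smul]

theorem pIndependent.dvd_of_sum_eq_mul {B : Subring A} {f : Fin m → A}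
    (hind : pIndependent B p f) (hij : i ≠ j) {r : Fin p → Fin p → A}
    (hr : ∀ s t, r s t ∈ pMonomialSpanWithout B p f i j) {c : A} (hc : c ∈ B)
    {h : (Fin m → Fin p) → A} (hh : ∀ β, h β ∈ B)
    (heq : ∑ s : Fin p, ∑ t : Fin p, r s t * f i ^ (s : ℕ) * f j ^ (t : ℕ) =
      c * ∑ β, h β * pMonomial f β) (s t : Fin p) :
    c ∣ r s t := by
  set G : Fin p → Fin p → A := fun s t =>
    ∑ α : VanishingExponents p i j, h ((exponentSplit hij).symm (α, s, t)) * pMonomial f α.1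
  have hG : ∀ s t, c * G s t ∈ pMonomialSpanWithout B p f i j := fun s t => by
    simp only [G, mul_sum, ← mul_assoc]
    exact Submodule.sum_mem _ fun α _ =>
      Submodule.smul_mem _ (⟨_, mul_mem hc (hh _)⟩ : B) (Submodule.subset_span ⟨α, rfl⟩)
  have hrG := hind.eq_zero_of_sum_eq_zero hij (fun s t => sub_mem (hr s t) (hG s t)) <| by
    simp only [sub_mul, sum_sub_distrib, sub_eq_zero]
    rw [heq, sum_mul_pMonomial_eq f hij, mul_sum]
    simp only [G, mul_sum, sum_mul, mul_assoc]
  exact ⟨G s t, sub_eq_zero.1 (hrG s t)⟩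

theorem exists_prod_pow_eq_mul_pMonomial {B : Subring A} {f : Fin m → A}
    (hfp : ∀ l, f l ^ p ∈ B) (n : Fin m → ℕ) :
    ∃ u ∈ B, ∏ l, f l ^ n l = u * pMonomial f (fun l => Fin.ofNat p (n l)) :=
  ⟨∏ l, (f l ^ p) ^ (n l / p), Subring.prod_mem _ fun l _ => pow_mem (hfp l) _, by
    simp only [pMonomial, Fin.val_ofNat, ← prod_mul_distrib, ← pow_mul, ← pow_add,
      Nat.div_add_mod]⟩

theorem closure_subset_pMonomialSpanWithout {B : Subring A} {f : Fin m → A}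
    (hfp : ∀ l, f l ^ p ∈ B) :
    (Subring.closure (↑B ∪ f '' {l | l ≠ i ∧ l ≠ j}) : Set A) ⊆
      pMonomialSpanWithout B p f i j := by
  set M := pMonomialSpanWithout B p f i j
  have hprod : ∀ n : Fin m → ℕ, n i = 0 → n j = 0 → ∏ l, f l ^ n l ∈ M := by
    intro n hi hj
    obtain ⟨u, hu, he⟩ := exists_prod_pow_eq_mul_pMonomial hfp n
    rw [he]
    exact M.smul_mem (⟨u, hu⟩ : B) (Submodule.subset_span ⟨⟨_, by simp [hi], by simp [hj]⟩, rfl⟩)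
  have hmul : ∀ x y, x ∈ M → y ∈ M → x * y ∈ M := by
    intro x y hx hy
    have hxy := Submodule.mul_mem_mul hx hy
    rw [Submodule.span_mul_span] at hxy
    refine Submodule.span_le.2 ?_ hxy
    rintro _ ⟨_, ⟨α, rfl⟩, _, ⟨β, rfl⟩, rfl⟩
    simpa [pMonomial, ← prod_mul_distrib, ← pow_add, α.2, β.2] using
      hprod (fun l => α.1 l + β.1 l) (by simp [α.2.1, β.2.1]) (by simp [α.2.2, β.2.2])
  let S : Subring A := (M.toSubalgebra (by simpa using hprod 0 rfl rfl) hmul).toSubring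
  refine (Subring.closure_le (t := S)).2 ?_
  rintro x (hx | ⟨l, ⟨hli, hlj⟩, rfl⟩)
  · show x ∈ M
    simpa [Subring.smul_def] using M.smul_mem (⟨x, hx⟩ : B) (hprod 0 rfl rfl)
  · show f l ∈ M
    simpa [Pi.single_apply] using hprod (Pi.single l 1) (by simp [hli.symm]) (by simp [hlj.symm])

theorem pIndependent.dvd_coeff_mul_coeff {B : Subring A} {f : Fin m → A}
    (hind : pIndependent B p f) (hfp : ∀ l, f l ^ p ∈ B) (hij : i ≠ j)
    {P Q : (Subring.closure (↑B ∪ f '' {l | l ≠ i ∧ l ≠ j}))[X]}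
    (hP : P.natDegree < p) (hQ : Q.natDegree < p) {c : A} (hc : c ∈ B)
    {h : (Fin m → Fin p) → A} (hh : ∀ β, h β ∈ B)
    (heq : aeval (f i) P * aeval (f j) Q = c * ∑ β, h β * pMonomial f β) (s t : Fin p) :
    c ∣ ↑(P.coeff s * Q.coeff t) :=
  hind.dvd_of_sum_eq_mul hij (r := fun s t => ↑(P.coeff s * Q.coeff t))
    (fun _ _ => closure_subset_pMonomialSpanWithout hfp (Subtype.prop _)) hc hh
    ((aeval_mul_aeval_eq_sum hP hQ _ _).symm.trans heq) s t

theorem pIndependent.dvd_mul_pow_of_mul_add_mul_pow_eq {B : Subring A} {f : Fin m → A}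
    (hind : pIndependent B p f) (hp1 : 1 < p) (hfp : ∀ l, f l ^ p ∈ B) (hij : i ≠ j)
    {b₁ b₂ c₁ c₂ : A} (hb₁ : b₁ ∈ Subring.closure (↑B ∪ f '' {l | l ≠ i ∧ l ≠ j}))
    (hb₂ : b₂ ∈ Subring.closure (↑B ∪ f '' {l | l ≠ i ∧ l ≠ j}))
    (hc₁ : c₁ ∈ Subring.closure (↑B ∪ f '' {l | l ≠ i ∧ l ≠ j}))
    (hc₂ : c₂ ∈ Subring.closure (↑B ∪ f '' {l | l ≠ i ∧ l ≠ j})) {c : A} (hc : c ∈ B)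
    {h : (Fin m → Fin p) → A} (hh : ∀ β, h β ∈ B)
    (heq : (b₁ * f i + c₁) * (b₂ * f j + c₂) ^ (p - 1) = c * ∑ β, h β * pMonomial f β) :
    c ∣ b₁ * b₂ ^ (p - 1) ∧ c ∣ c₁ * b₂ ^ (p - 1) ∧
      c ∣ b₁ * c₂ ^ (p - 1) ∧ c ∣ c₁ * c₂ ^ (p - 1) := by
  set R := Subring.closure (↑B ∪ f '' {l | l ≠ i ∧ l ≠ j})
  set P : R[X] := C ⟨b₁, hb₁⟩ * X + C ⟨c₁, hc₁⟩
  set Q : R[X] := (C ⟨b₂, hb₂⟩ * X + C ⟨c₂, hc₂⟩) ^ (p - 1)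
  have hP : P.natDegree < p := natDegree_linear_le.trans_lt hp1
  have hQ : Q.natDegree < p := (natDegree_pow_le_of_le _ natDegree_linear_le).trans_lt (by omega)
  have hQ0 : Q.coeff 0 = ⟨c₂, hc₂⟩ ^ (p - 1) := by simp [Q, coeff_zero_eq_eval_zero]
  have hQtop : Q.coeff (p - 1) = ⟨b₂, hb₂⟩ ^ (p - 1) := by
    have h := coeff_pow_of_natDegree_le (m := p - 1)
      (natDegree_linear_le (a := (⟨b₂, hb₂⟩ : R)) (b := ⟨c₂, hc₂⟩))
    rwa [mul_one, coeff_add, coeff_C_mul_X, coeff_C, if_pos rfl, if_neg one_ne_zero, add_zero] at h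
  have hdvd := hind.dvd_coeff_mul_coeff hfp hij hP hQ hc hh <| by
    simpa [P, Q, Algebra.algebraMap_ofSubsemiring_apply] using heq
  refine ⟨?_, ?_, ?_, ?_⟩
  · simpa [P, hQtop] using hdvd ⟨1, hp1⟩ ⟨p - 1, by omega⟩
  · simpa [P, hQtop] using hdvd 0 ⟨p - 1, by omega⟩
  · simpa [P, hQ0] using hdvd ⟨1, hp1⟩ 0
  · simpa [P, hQ0] using hdvd 0 0

end

theorem isRelPrime_of_pBasis_general
    {A : Type*} [CommRing A] [IsDomain A] [UniqueFactorizationMonoid A]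
    (p : ℕ) (hp : 0 < p) [CharP A p]
    (B : Subring A) (hB : ∀ a : A, a ^ p ∈ B) {m : ℕ} (f : Fin m → A)
    (hbasis : IsPBasis B (CB B f) p f) :
    ∀ i j : Fin m, i ≠ j → ∀ b₁ b₂ c₁ c₂ : A,
      b₁ ∈ Subring.closure ((B : Set A) ∪ (f '' {l | l ≠ i ∧ l ≠ j})) →
      b₂ ∈ Subring.closure ((B : Set A) ∪ (f '' {l | l ≠ i ∧ l ≠ j})) →
      c₁ ∈ Subring.closure ((B : Set A) ∪ (f '' {l | l ≠ i ∧ l ≠ j})) →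
      c₂ ∈ Subring.closure ((B : Set A) ∪ (f '' {l | l ≠ i ∧ l ≠ j})) →
      b₁ ≠ 0 → b₂ ≠ 0 → IsRelPrime b₁ c₁ → IsRelPrime b₂ c₂ →
      IsRelPrime (b₁ * f i + c₁) (b₂ * f j + c₂) := by
  intro i j hij b₁ b₂ c₁ c₂ hb₁ hb₂ hc₁ hc₂ hb₁0 _ hrp₁ hrp₂
  have : NeZero p := ⟨hp.ne'⟩
  have hp1 : 1 < p := (CharP.char_is_prime_of_pos A p).out.one_lt
  have hfp : ∀ l, f l ^ p ∈ B := fun l => hB (f l)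
  have hind : pIndependent B p f := hbasis.2.2.1
  -- with `b₂ = 0`, `c₂ = 1` and `c = 0`, the coefficient comparison reads `b₁ = 0`
  have hu : b₁ * f i + c₁ ≠ 0 := fun hu => hb₁0 <| by
    simpa using (hind.dvd_mul_pow_of_mul_add_mul_pow_eq hp1 hfp hij hb₁ (zero_mem _) hc₁
      (one_mem _) (zero_mem B) (h := 0) (fun _ => zero_mem B) (by simp [hu])).2.2.1
  refine (UniqueFactorizationMonoid.isRelPrime_iff_no_prime_factors hu).2 fun q hqu hqw hq => ?_
  obtain ⟨g, hgCB, hg⟩ := exists_mem_CB_of_dvd (hB q) (pow_ne_zero p hq.ne_zero)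
    (mul_mem (mul_add_mem_closure hb₁ hc₁ i) (pow_mem (mul_add_mem_closure hb₂ hc₂ j) _))
    (mul_pow_sub_one hp.ne' q ▸ mul_dvd_mul hqu (pow_dvd_pow_of_dvd hqw _))
  obtain ⟨h, hhB, rfl⟩ := hbasis.2.2.2 g hgCB
  obtain ⟨hbb, hcb, hbc, hcc⟩ :=
    hind.dvd_mul_pow_of_mul_add_mul_pow_eq hp1 hfp hij hb₁ hb₂ hc₁ hc₂ (hB q) hhB hg
  have hq_dvd {x : A} (hx : q ^ p ∣ x) : q ∣ x := (dvd_pow_self q hp.ne').trans hx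
  have hqb₂ := hq.dvd_of_isRelPrime_of_dvd_mul hrp₁ (hq_dvd hbb) (hq_dvd hcb)
  have hqc₂ := hq.dvd_of_isRelPrime_of_dvd_mul hrp₁ (hq_dvd hbc) (hq_dvd hcc)
  exact hq.not_isUnit (hrp₂ (hq.dvd_of_dvd_pow hqb₂) (hq.dvd_of_dvd_pow hqc₂))

/-- **Proposition 3 (ii).** Let `m > 1`. If `f₁,…,f_m` form a `p`-basis of `C_B(f₁,…,f_m)`
over `B`, then for all `i ≠ j` and all `b₁, b₂, c₁, c₂ ∈ R_{ij} = B[f₁,…,f̂ᵢ,…,f̂ⱼ,…,f_m]`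
with `b₁, b₂ ≠ 0`, `gcd(b₁,c₁) ∼ 1` and `gcd(b₂,c₂) ∼ 1`, the elements `b₁·fᵢ + c₁` and
`b₂·fⱼ + c₂` have unit gcd. -/
theorem isRelPrime_of_pBasis
    {A : Type*} [CommRing A] [IsDomain A] [UniqueFactorizationMonoid A]
    (p : ℕ) (hp : 0 < p) [CharP A p]
    (B : Subring A) (hB : ∀ a : A, a ^ p ∈ B) {m : ℕ} (hm : 1 < m) (f : Fin m → A)
    (hbasis : IsPBasis B (CB B f) p f) :
    ∀ i j : Fin m, i ≠ j → ∀ b₁ b₂ c₁ c₂ : A,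
      b₁ ∈ Subring.closure ((B : Set A) ∪ (f '' {l | l ≠ i ∧ l ≠ j})) →
      b₂ ∈ Subring.closure ((B : Set A) ∪ (f '' {l | l ≠ i ∧ l ≠ j})) →
      c₁ ∈ Subring.closure ((B : Set A) ∪ (f '' {l | l ≠ i ∧ l ≠ j})) →
      c₂ ∈ Subring.closure ((B : Set A) ∪ (f '' {l | l ≠ i ∧ l ≠ j})) →
      b₁ ≠ 0 → b₂ ≠ 0 → IsRelPrime b₁ c₁ → IsRelPrime b₂ c₂ →
      IsRelPrime (b₁ * f i + c₁) (b₂ * f j + c₂) :=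
  isRelPrime_of_pBasis_general p hp B hB f hbasis
end

section
/- Let A be a UFD of characteristic p > 0 and B a subring of A with A^p ⊆ B, and let f ∈ A. Suppose g^ε divides b·f + c for some irreducible element g ∈ A, some ε ∈ {1,2}, and some b,c ∈ B with g ∤ b. Then there exists c' ∈ B such that g^ε divides b·f + c' and gcd(b,c') is a unit (every common divisor of b and c' is invertible). -/
/-- **Lemma 7.** Let `A` be a UFD of characteristic `p > 0` and `B` a subring with `Aᵖ ⊆ B`.
If `g^ε ∣ b·f + c` for an irreducible `g`, `ε ∈ {1,2}` and `b, c ∈ B` with `g ∤ b`, then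
there is `c' ∈ B` with `g^ε ∣ b·f + c'` and `gcd(b,c') ∼ 1`. -/
theorem exists_coprime_translate
    {A : Type*} [CommRing A] [IsDomain A] [UniqueFactorizationMonoid A]
    (p : ℕ) (hp : 0 < p) [CharP A p]
    (B : Subring A) (hB : ∀ a : A, a ^ p ∈ B)
    (f g : A) (hg : Irreducible g) (ε : ℕ) (hε : ε = 1 ∨ ε = 2)
    (b c : A) (hb : b ∈ B) (hc : c ∈ B) (hgb : ¬ g ∣ b)
    (hdvd : g ^ ε ∣ b * f + c) :
    ∃ c' : A, c' ∈ B ∧ g ^ ε ∣ b * f + c' ∧ IsRelPrime b c' := by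
  classical
  have hb0 : b ≠ 0 := fun h => hgb (h ▸ dvd_zero g)
  -- u = product of irreducible factors of b that do not divide c
  set F : Multiset A := (UniqueFactorizationMonoid.factors b).filter (fun q => ¬ q ∣ c) with hF
  set u : A := F.prod with hu
  have hirr : ∀ q ∈ F, Irreducible q := fun q hq =>
    UniqueFactorizationMonoid.irreducible_of_factor q (Multiset.mem_filter.mp hq).1
  have hndvd : ∀ q ∈ F, ¬ q ∣ c := fun q hq => (Multiset.mem_filter.mp hq).2
  refine ⟨c + (g ^ ε * u) ^ p, B.add_mem hc (hB _), ?_, ?_⟩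
  · have h1 : g ^ ε ∣ (g ^ ε * u) ^ p := by
      have : (g ^ ε * u) ^ p = (g ^ ε) ^ p * u ^ p := mul_pow _ _ _
      rw [this]
      exact dvd_mul_of_dvd_left (dvd_pow_self _ hp.ne') _
    have : b * f + (c + (g ^ ε * u) ^ p) = (b * f + c) + (g ^ ε * u) ^ p := by ring
    rw [this]
    exact dvd_add hdvd h1
  · intro d hdb hdc'
    by_contra hdu
    obtain ⟨q, hqirr, hqd⟩ := WfDvdMonoid.exists_irreducible_factor hdu
      (fun h0 => hb0 (zero_dvd_iff.mp (h0 ▸ hdb)))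
    have hqprime : Prime q := UniqueFactorizationMonoid.irreducible_iff_prime.mp hqirr
    have hqb : q ∣ b := hqd.trans hdb
    have hqc' : q ∣ c + (g ^ ε * u) ^ p := hqd.trans hdc'
    -- q does not divide g
    have hqg : ¬ q ∣ g := by
      intro hqg
      exact hgb ((hqirr.associated_of_dvd hg hqg).symm.dvd.trans hqb)
    -- q does not divide u
    have hqu : ¬ q ∣ u := by
      intro hqu
      obtain ⟨r, hrF, hqr⟩ := hqprime.exists_mem_multiset_dvd hqu
      have hqrassoc : Associated q r := hqirr.associated_of_dvd (hirr r hrF) hqr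
      -- so q ∤ c
      have hqc : ¬ q ∣ c := fun h => hndvd r hrF (hqrassoc.symm.dvd.trans h)
      -- but q ∣ b and q ∤ c means some factor of b associated to q is in F... derive q ∣ c
      -- instead: from hqc' and q ∣ u we get q ∣ c
      have : q ∣ (g ^ ε * u) ^ p := dvd_pow (dvd_mul_of_dvd_right hqu _) hp.ne'
      exact hqc ((dvd_add_right this).mp (by rwa [add_comm] at hqc'))
    -- case on whether q ∣ c
    by_cases hqc : q ∣ c
    · -- then q ∣ (g^ε * u)^p, so q ∣ g or q ∣ u, both impossible
      have h2 : q ∣ (g ^ ε * u) ^ p := (dvd_add_right hqc).mp hqc'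
      have h3 : q ∣ g ^ ε * u := hqprime.dvd_of_dvd_pow h2
      rcases hqprime.dvd_mul.mp h3 with h | h
      · exact hqg (hqprime.dvd_of_dvd_pow h)
      · exact hqu h
    · -- then q divides some factor r of b with r ∤ c, so r ∈ F and q ∣ u
      have hqfb : q ∣ (UniqueFactorizationMonoid.factors b).prod :=
        ((UniqueFactorizationMonoid.factors_prod hb0).dvd_iff_dvd_right).mpr hqb
      obtain ⟨r, hrb, hqr⟩ := hqprime.exists_mem_multiset_dvd hqfb
      have hqrassoc : Associated q r :=
        hqirr.associated_of_dvd (UniqueFactorizationMonoid.irreducible_of_factor r hrb) hqr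
      have hrc : ¬ r ∣ c := fun h => hqc (hqrassoc.dvd.trans h)
      have hrF : r ∈ F := Multiset.mem_filter.mpr ⟨hrb, hrc⟩
      exact hqu (hqr.trans (Multiset.dvd_prod hrF))
end
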